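/- arXiv:1407.5518 — 4 statements merged into one kernel-verified Lean document; each statement's English description precedes it below -/
import Mathlib

section
/- Let p>1, b>0 and σ>0, and set α = ((p-1)/p)·σ^{1/(1-p)} and C_p = ((p-1)/p)^p. Then for every absolutely continuous function u on [0,b] one has ∫_0^b |u'(t)|^p dt + σ|u(0)|^p ≥ C_p ∫_0^b |u(t)|^p/(t+α)^p dt + (p-1)·C_p·(b+α)^{-p} ∫_0^b |u(t)|^p dt. -/
/-!
Put `β = (p - 1) / p`, so that `C_p = β ^ p`, and use the weight
`w t = β ^ (p - 1) * ((t + α) ^ (1 - p) - (b + α) ^ (1 - p))` on `[0, b]`.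
It vanishes at `b`, `-w' t = p C_p (t + α) ^ (-p)`, and `w 0 ≤ σ` by the choice of `α`.
Integrating `(|u|^p w)'` over `[0, b]` and bounding `(|u|^p)' w ≤ p |u|^(p-1) |u'| w` by Young's
inequality with exponents `p` and `p' = p / (p - 1)` gives
`p C_p ∫ |u|^p / (t + α)^p ≤ σ |u 0|^p + ∫ |u'|^p + (p - 1) ∫ |u|^p w^p'`,
and superadditivity of `x ↦ x ^ p'` gives `w ^ p' ≤ C_p ((t + α) ^ (-p) - (b + α) ^ (-p))`.
-/

open MeasureTheory Set Filter
open scoped ENNReal Topology NNReal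

theorem AbsolutelyContinuousOnInterval.comp_lipschitzOnWith {X Y : Type*} [PseudoMetricSpace X]
    [PseudoMetricSpace Y] {f : ℝ → X} {φ : X → Y} {s : Set X} {K : ℝ≥0} {a b : ℝ}
    (hf : AbsolutelyContinuousOnInterval f a b) (hφ : LipschitzOnWith K φ s)
    (hfs : MapsTo f (uIcc a b) s) : AbsolutelyContinuousOnInterval (φ ∘ f) a b := by
  have hK : Tendsto _ _ (𝓝 ((K : ℝ) * 0)) := Tendsto.const_mul (K : ℝ) hf
  rw [mul_zero] at hK
  refine squeeze_zero' (.of_forall fun _ ↦ Finset.sum_nonneg fun _ _ ↦ dist_nonneg) ?_ hK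
  filter_upwards [mem_inf_of_right (mem_principal_self _)] with E hE
  rw [Finset.mul_sum]
  exact Finset.sum_le_sum fun i hi ↦
    hφ.dist_le_mul _ (hfs (hE.1 i hi).1) _ (hfs (hE.1 i hi).2)

theorem AbsolutelyContinuousOnInterval.comp_locallyLipschitz {F Y : Type*}
    [SeminormedAddCommGroup F] [PseudoMetricSpace Y] {f : ℝ → F} {φ : F → Y} {a b : ℝ}
    (hf : AbsolutelyContinuousOnInterval f a b) (hφ : LocallyLipschitz φ) :
    AbsolutelyContinuousOnInterval (φ ∘ f) a b := by
  have hc : IsCompact (f '' uIcc a b) := isCompact_uIcc.image_of_continuousOn hf.continuousOn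
  obtain ⟨K, hK⟩ := hφ.locallyLipschitzOn.exists_lipschitzOnWith_of_compact hc
  exact hf.comp_lipschitzOnWith hK (mapsTo_image f _)

theorem absolutelyContinuousOnInterval_const {X : Type*} [PseudoMetricSpace X] (c : X) (a b : ℝ) :
    AbsolutelyContinuousOnInterval (fun _ ↦ c) a b := by
  simpa [AbsolutelyContinuousOnInterval] using tendsto_const_nhds

theorem AbsolutelyContinuousOnInterval.abs_rpow {f : ℝ → ℝ} {a b p : ℝ}
    (hf : AbsolutelyContinuousOnInterval f a b) (hp : 1 < p) :
    AbsolutelyContinuousOnInterval (fun t ↦ |f t| ^ p) a b := by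
  simpa [Function.comp_def] using
    hf.comp_locallyLipschitz (contDiff_norm_rpow (E := ℝ) hp).locallyLipschitz

theorem mul_abs_rpow_sub_two_mul_le {p q : ℝ} (hpq : p.HolderConjugate q) (x v : ℝ) {w : ℝ}
    (hw : 0 ≤ w) : p * |x| ^ (p - 2) * x * v * w ≤ |v| ^ p + (p - 1) * (|x| ^ p * w ^ q) := by
  have hp := hpq.pos
  have hx : |x| ^ (p - 2) * |x| = |x| ^ (p - 1) := by
    rw [← Real.rpow_add_one' (abs_nonneg x) (by linarith [hpq.sub_one_pos])]
    ring_nf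
  have hxw : 0 ≤ |x| ^ (p - 1) * w := by positivity
  calc p * |x| ^ (p - 2) * x * v * w
      ≤ p * (|v| * (|x| ^ (p - 1) * w)) := by
        rw [← hx]
        refine (le_abs_self _).trans (le_of_eq ?_)
        rw [abs_mul, abs_mul, abs_mul, abs_mul, abs_of_pos hp, abs_of_nonneg hw,
          abs_of_nonneg (by positivity : (0:ℝ) ≤ |x| ^ (p - 2))]
        ring
    _ ≤ p * (|v| ^ p / p + (|x| ^ (p - 1) * w) ^ q / q) := by
        gcongr
        exact Real.young_inequality_of_nonneg (abs_nonneg v) hxw hpq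
    _ = |v| ^ p + (p - 1) * (|x| ^ p * w ^ q) := by
        rw [Real.mul_rpow (by positivity) hw, ← Real.rpow_mul (abs_nonneg x),
          hpq.sub_one_mul_conj, ← hpq.div_conj_eq_sub_one]
        field_simp

theorem AbsolutelyContinuousOnInterval.neg_integral_abs_rpow_mul_deriv_le {u w : ℝ → ℝ}
    {p q a b : ℝ} (hpq : p.HolderConjugate q) (hab : a ≤ b)
    (hu : AbsolutelyContinuousOnInterval u a b) (hw : AbsolutelyContinuousOnInterval w a b)
    (hw_nonneg : ∀ t ∈ Icc a b, 0 ≤ w t) (hwb : w b = 0)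
    (hu' : IntervalIntegrable (fun t ↦ |deriv u t| ^ p) volume a b) :
    -∫ t in a..b, |u t| ^ p * deriv w t ≤
      |u a| ^ p * w a + (∫ t in a..b, |deriv u t| ^ p) +
        (p - 1) * ∫ t in a..b, |u t| ^ p * w t ^ q := by
  have hp : 1 < p := hpq.lt
  have hF := hu.abs_rpow hp
  have hFw : IntervalIntegrable (fun t ↦ deriv (fun t ↦ |u t| ^ p) t * w t) volume a b :=
    hF.intervalIntegrable_deriv.mul_continuousOn hw.continuousOn
  have hFw' : IntervalIntegrable (fun t ↦ |u t| ^ p * deriv w t) volume a b :=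
    hw.intervalIntegrable_deriv.continuousOn_mul hF.continuousOn
  have hFwq : IntervalIntegrable (fun t ↦ |u t| ^ p * w t ^ q) volume a b :=
    (hF.continuousOn.mul
      (hw.continuousOn.rpow_const fun _ _ ↦ Or.inr hpq.symm.nonneg)).intervalIntegrable
  have hparts := hF.integral_deriv_mul_eq_sub hw
  rw [intervalIntegral.integral_add hFw hFw', hwb, mul_zero, zero_sub] at hparts
  have hpointwise : ∀ᵐ t, t ∈ Icc a b →
      deriv (fun t ↦ |u t| ^ p) t * w t ≤
        |deriv u t| ^ p + (p - 1) * (|u t| ^ p * w t ^ q) := by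
    filter_upwards [hu.ae_differentiableAt] with t hdiff ht
    have hchain : HasDerivAt (fun t ↦ |u t| ^ p) (p * |u t| ^ (p - 2) * u t * deriv u t) t :=
      (hasDerivAt_abs_rpow (u t) hp).comp t (hdiff (Icc_subset_uIcc ht)).hasDerivAt
    rw [hchain.deriv]
    exact mul_abs_rpow_sub_two_mul_le hpq _ _ (hw_nonneg t ht)
  have hmono := intervalIntegral.integral_mono_ae_restrict hab hFw (hu'.add (hFwq.const_mul _))
    ((ae_restrict_iff' measurableSet_Icc).2 hpointwise)
  rw [intervalIntegral.integral_add hu' (hFwq.const_mul _),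
    intervalIntegral.integral_const_mul] at hmono
  linarith

noncomputable def robinWeight (p α b t : ℝ) : ℝ :=
  ((p - 1) / p) ^ (p - 1) * ((t + α) ^ (1 - p) - (b + α) ^ (1 - p))

section robinWeight

variable {p α b t : ℝ}

theorem robinWeight_self : robinWeight p α b b = 0 := by
  simp [robinWeight]

theorem robinWeight_nonneg (hp : 1 ≤ p) (ht : 0 < t + α) (htb : t ≤ b) :
    0 ≤ robinWeight p α b t := by
  have hβ : 0 ≤ (p - 1) / p := div_nonneg (by linarith) (by linarith)
  refine mul_nonneg (Real.rpow_nonneg hβ _) (sub_nonneg.2 ?_)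
  exact Real.rpow_le_rpow_of_nonpos ht (by linarith) (by linarith)

theorem hasDerivAt_robinWeight (hp : 1 < p) (ht : 0 < t + α) :
    HasDerivAt (robinWeight p α b) (-(p * ((p - 1) / p) ^ p) * (t + α) ^ (-p)) t := by
  have hβ : 0 < (p - 1) / p := div_pos (by linarith) (by linarith)
  have hpow : HasDerivAt (fun t ↦ (t + α) ^ (1 - p)) ((1 - p) * (t + α) ^ (-p)) t := by
    have := (Real.hasDerivAt_rpow_const (p := 1 - p) (Or.inl ht.ne')).comp t
      ((hasDerivAt_id t).add_const α)
    simpa [Function.comp_def] using this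
  refine ((hpow.sub_const _).const_mul (((p - 1) / p) ^ (p - 1))).congr_deriv ?_
  have hp1 : p - 1 ≠ 0 := by linarith
  rw [Real.rpow_sub_one hβ.ne']
  field_simp
  ring

theorem robinWeight_rpow_le {q : ℝ} (hpq : p.HolderConjugate q) (ht : 0 < t + α)
    (htb : t ≤ b) :
    robinWeight p α b t ^ q ≤ ((p - 1) / p) ^ p * ((t + α) ^ (-p) - (b + α) ^ (-p)) := by
  have hp := hpq.lt
  have hβ : 0 ≤ (p - 1) / p := div_nonneg (by linarith) (by linarith)
  have hbt : (b + α) ^ (1 - p) ≤ (t + α) ^ (1 - p) :=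
    Real.rpow_le_rpow_of_nonpos ht (by linarith) (by linarith)
  have hexp : ∀ x : ℝ, 0 ≤ x → (x ^ (1 - p)) ^ q = x ^ (-p) := fun x hx ↦ by
    rw [← Real.rpow_mul hx, show (1 - p) * q = -((p - 1) * q) by ring, hpq.sub_one_mul_conj]
  have hsuper := Real.add_rpow_le_rpow_add (sub_nonneg.2 hbt)
    (Real.rpow_nonneg (by linarith : (0:ℝ) ≤ b + α) (1 - p)) hpq.symm.lt.le
  rw [sub_add_cancel, hexp _ ht.le, hexp _ (by linarith)] at hsuper
  rw [robinWeight, Real.mul_rpow (Real.rpow_nonneg hβ _) (sub_nonneg.2 hbt),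
    ← Real.rpow_mul hβ, hpq.sub_one_mul_conj]
  gcongr
  linarith

theorem sub_one_div_mul_rpow_pos {σ : ℝ} (hp : 1 < p) (hσ : 0 < σ) :
    0 < (p - 1) / p * σ ^ (1 / (1 - p)) :=
  mul_pos (div_pos (by linarith) (by linarith)) (Real.rpow_pos_of_pos hσ _)

theorem robinWeight_zero_le {σ : ℝ} (hp : 1 < p) (hσ : 0 < σ) (hb : 0 ≤ b) :
    robinWeight p ((p - 1) / p * σ ^ (1 / (1 - p))) b 0 ≤ σ := by
  have hβ : 0 < (p - 1) / p := div_pos (by linarith) (by linarith)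
  have hα := sub_one_div_mul_rpow_pos hp hσ
  have hσ' : ((p - 1) / p) ^ (p - 1) * ((p - 1) / p * σ ^ (1 / (1 - p))) ^ (1 - p) = σ := by
    rw [Real.mul_rpow hβ.le (Real.rpow_nonneg hσ.le _), ← Real.rpow_mul hσ.le,
      one_div_mul_cancel (by linarith), Real.rpow_one, ← mul_assoc, ← Real.rpow_add hβ]
    simp
  rw [robinWeight, zero_add, mul_sub, hσ', sub_le_self_iff]
  exact mul_nonneg (Real.rpow_nonneg hβ.le _) (Real.rpow_nonneg (by linarith) _)

theorem absolutelyContinuousOnInterval_robinWeight (hα : 0 < α) (hb : 0 ≤ b) :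
    AbsolutelyContinuousOnInterval (robinWeight p α b) 0 b := by
  refine ContDiffOn.absolutelyContinuousOnInterval fun t ht ↦ ContDiffAt.contDiffWithinAt ?_
  rw [uIcc_of_le hb] at ht
  have hpow : ContDiffAt ℝ 1 (fun t ↦ (t + α) ^ (1 - p)) t :=
    (Real.contDiffAt_rpow_const_of_ne (by linarith [ht.1])).comp t
      (contDiffAt_id.add contDiffAt_const)
  exact contDiffAt_const.mul (hpow.sub contDiffAt_const)

end robinWeight

theorem ContinuousOn.abs_rpow_div_add_rpow {u : ℝ → ℝ} {s : Set ℝ} {p α : ℝ}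
    (hu : ContinuousOn u s) (hp : 0 ≤ p) (hs : ∀ t ∈ s, 0 < t + α) :
    ContinuousOn (fun t ↦ |u t| ^ p / (t + α) ^ p) s :=
  (hu.abs.rpow_const fun _ _ ↦ Or.inr hp).div
    ((continuousOn_id.add continuousOn_const).rpow_const fun _ _ ↦ Or.inr hp)
    fun t ht ↦ (Real.rpow_pos_of_pos (hs t ht) p).ne'

theorem AbsolutelyContinuousOnInterval.hardy_robin_inequality {p b σ α Cp : ℝ} {u : ℝ → ℝ}
    (hp : 1 < p) (hb : 0 ≤ b) (hσ : 0 < σ) (hα : α = (p - 1) / p * σ ^ (1 / (1 - p)))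
    (hCp : Cp = ((p - 1) / p) ^ p) (hu : AbsolutelyContinuousOnInterval u 0 b)
    (hu' : IntervalIntegrable (fun t ↦ |deriv u t| ^ p) volume 0 b) :
    Cp * (∫ t in 0..b, |u t| ^ p / (t + α) ^ p) +
        (p - 1) * Cp / (b + α) ^ p * ∫ t in 0..b, |u t| ^ p ≤
      (∫ t in 0..b, |deriv u t| ^ p) + σ * |u 0| ^ p := by
  have hα0 : 0 < α := hα ▸ sub_one_div_mul_rpow_pos hp hσ
  have htα : ∀ t ∈ Icc 0 b, 0 < t + α := fun t ht ↦ by linarith [ht.1]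
  have hpq := Real.HolderConjugate.conjExponent hp
  have hw := absolutelyContinuousOnInterval_robinWeight (p := p) hα0 hb
  have hF := hu.abs_rpow hp
  have hF_div : IntervalIntegrable (fun t ↦ |u t| ^ p / (t + α) ^ p) volume 0 b :=
    (hu.continuousOn.abs_rpow_div_add_rpow (by linarith)
      (uIcc_of_le hb ▸ htα)).intervalIntegrable
  have hF_int : IntervalIntegrable (fun t ↦ |u t| ^ p) volume 0 b :=
    hF.continuousOn.intervalIntegrable
  have hweight_deriv : ∫ t in 0..b, |u t| ^ p * deriv (robinWeight p α b) t =
      -(p * Cp) * ∫ t in 0..b, |u t| ^ p / (t + α) ^ p := by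
    rw [← intervalIntegral.integral_const_mul]
    refine intervalIntegral.integral_congr fun t ht ↦ ?_
    rw [uIcc_of_le hb] at ht
    rw [(hasDerivAt_robinWeight hp (htα t ht)).deriv, Real.rpow_neg (htα t ht).le, hCp]
    ring
  have hweight_rpow : ∫ t in 0..b, |u t| ^ p * robinWeight p α b t ^ p.conjExponent ≤
      Cp * (∫ t in 0..b, |u t| ^ p / (t + α) ^ p) -
        Cp / (b + α) ^ p * ∫ t in 0..b, |u t| ^ p := by
    rw [← intervalIntegral.integral_const_mul, ← intervalIntegral.integral_const_mul,
      ← intervalIntegral.integral_sub (hF_div.const_mul _) (hF_int.const_mul _)]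
    refine intervalIntegral.integral_mono_on hb ?_ ?_ fun t ht ↦ ?_
    · exact (hF.continuousOn.mul (hw.continuousOn.rpow_const
        fun _ _ ↦ Or.inr hpq.symm.nonneg)).intervalIntegrable
    · exact (hF_div.const_mul _).sub (hF_int.const_mul _)
    · calc |u t| ^ p * robinWeight p α b t ^ p.conjExponent
          ≤ |u t| ^ p * (((p - 1) / p) ^ p * ((t + α) ^ (-p) - (b + α) ^ (-p))) :=
            mul_le_mul_of_nonneg_left (robinWeight_rpow_le hpq (htα t ht) ht.2) (by positivity)
        _ = _ := by
            rw [Real.rpow_neg (htα t ht).le, Real.rpow_neg (htα b ⟨hb, le_rfl⟩).le, hCp]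
            ring
  have hweight_zero : |u 0| ^ p * robinWeight p α b 0 ≤ σ * |u 0| ^ p := by
    rw [mul_comm, hα]
    exact mul_le_mul_of_nonneg_right (robinWeight_zero_le hp hσ hb) (by positivity)
  have henergy := hu.neg_integral_abs_rpow_mul_deriv_le hpq hb hw
    (fun t ht ↦ robinWeight_nonneg hp.le (htα t ht) ht.2) robinWeight_self hu'
  rw [hweight_deriv] at henergy
  have hweight_rpow' := mul_le_mul_of_nonneg_left hweight_rpow (by linarith : (0:ℝ) ≤ p - 1)
  rw [mul_div_assoc]
  linarith

theorem hardy_robin_inequality_of_eq_integral {p b σ α Cp : ℝ} {u g : ℝ → ℝ} (hp : 1 < p)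
    (hb : 0 ≤ b) (hσ : 0 < σ) (hα : α = (p - 1) / p * σ ^ (1 / (1 - p)))
    (hCp : Cp = ((p - 1) / p) ^ p) (hg : IntervalIntegrable g volume 0 b)
    (hgp : IntervalIntegrable (fun t ↦ |g t| ^ p) volume 0 b)
    (hac : ∀ t ∈ Icc (0 : ℝ) b, u t = u 0 + ∫ s in (0 : ℝ)..t, g s) :
    Cp * (∫ t in 0..b, |u t| ^ p / (t + α) ^ p) +
        (p - 1) * Cp / (b + α) ^ p * ∫ t in 0..b, |u t| ^ p ≤
      (∫ t in 0..b, |g t| ^ p) + σ * |u 0| ^ p := by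
  set U : ℝ → ℝ := fun t ↦ u 0 + ∫ s in (0 : ℝ)..t, g s
  have hU : AbsolutelyContinuousOnInterval U 0 b :=
    (absolutelyContinuousOnInterval_const (u 0) 0 b).fun_add
      (hg.absolutelyContinuousOnInterval_intervalIntegral left_mem_uIcc)
  have hU_deriv : ∀ᵐ t, t ∈ uIoc 0 b → |deriv U t| ^ p = |g t| ^ p := by
    filter_upwards [hg.ae_hasDerivAt_integral] with t ht ht'
    rw [((ht (uIoc_subset_uIcc ht') 0 left_mem_uIcc).const_add (u 0)).deriv]
  have hUu : EqOn U u (uIcc 0 b) := fun t ht ↦ (hac t (uIcc_of_le hb ▸ ht)).symm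
  have hineq := hU.hardy_robin_inequality hp hb hσ hα hCp <| hgp.congr_ae <|
    (ae_restrict_iff' measurableSet_uIoc).2 (hU_deriv.mono fun _ h h' ↦ (h h').symm)
  rwa [intervalIntegral.integral_congr_ae hU_deriv,
    intervalIntegral.integral_congr (f := fun t ↦ |U t| ^ p / (t + α) ^ p)
      (g := fun t ↦ |u t| ^ p / (t + α) ^ p) fun t ht ↦ by simp only [hUu ht],
    intervalIntegral.integral_congr (f := fun t ↦ |U t| ^ p) (g := fun t ↦ |u t| ^ p)
      fun t ht ↦ by simp only [hUu ht],
    show U 0 = u 0 by simp [U]] at hineq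

theorem lintegral_Icc_ofReal_eq_ofReal_intervalIntegral {f : ℝ → ℝ} {a b : ℝ}
    (hab : a ≤ b) (hf : IntegrableOn f (Icc a b)) (hf_nonneg : ∀ t ∈ Icc a b, 0 ≤ f t) :
    ∫⁻ t in Icc a b, ENNReal.ofReal (f t) = ENNReal.ofReal (∫ t in a..b, f t) := by
  rw [intervalIntegral.integral_of_le hab, ← integral_Icc_eq_integral_Ioc,
    ofReal_integral_eq_lintegral_ofReal hf ((ae_restrict_iff' measurableSet_Icc).2
      (.of_forall hf_nonneg))]

theorem ENNReal.ofReal_mul_add_ofReal_mul_le {a x c y d e : ℝ} (ha : 0 ≤ a) (hx : 0 ≤ x)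
    (hc : 0 ≤ c) (hy : 0 ≤ y) (h : a * x + c * y ≤ d + e) :
    ENNReal.ofReal a * ENNReal.ofReal x + ENNReal.ofReal c * ENNReal.ofReal y ≤
      ENNReal.ofReal d + ENNReal.ofReal e := by
  rw [← ENNReal.ofReal_mul ha, ← ENNReal.ofReal_mul hc,
    ← ENNReal.ofReal_add (mul_nonneg ha hx) (mul_nonneg hc hy)]
  exact (ENNReal.ofReal_le_ofReal h).trans ENNReal.ofReal_add_le

/-- **Lemma 3.1 (one-dimensional Hardy inequality with Robin boundary term).**
Let `p > 1`, `b > 0`, `σ > 0`, `α = ((p-1)/p)·σ^{1/(1-p)}` and `C_p = ((p-1)/p)^p`.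
For every absolutely continuous function `u` on `[0,b]` (encoded via an integrable
a.e. derivative `g` with `u t = u 0 + ∫_0^t g`),
`∫_0^b |u'|^p + σ|u(0)|^p ≥ C_p ∫_0^b |u|^p/(t+α)^p + (p-1) C_p (b+α)^{-p} ∫_0^b |u|^p`. -/
theorem onedim_hardy_robin (p b σ α Cp : ℝ) (hp : 1 < p) (hb : 0 < b) (hσ : 0 < σ)
    (hα : α = (p - 1) / p * σ ^ (1 / (1 - p))) (hCp : Cp = ((p - 1) / p) ^ p)
    (u g : ℝ → ℝ) (hg : IntegrableOn g (Icc 0 b))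
    (hac : ∀ t ∈ Icc (0 : ℝ) b, u t = u 0 + ∫ s in (0 : ℝ)..t, g s) :
    (∫⁻ t in Icc (0 : ℝ) b, ENNReal.ofReal (|g t| ^ p)) + ENNReal.ofReal (σ * |u 0| ^ p) ≥
      ENNReal.ofReal Cp *
          (∫⁻ t in Icc (0 : ℝ) b, ENNReal.ofReal (|u t| ^ p / (t + α) ^ p)) +
        ENNReal.ofReal ((p - 1) * Cp / (b + α) ^ p) *
          ∫⁻ t in Icc (0 : ℝ) b, ENNReal.ofReal (|u t| ^ p) := by
  by_cases htop : ∫⁻ t in Icc (0 : ℝ) b, ENNReal.ofReal (|g t| ^ p) = ⊤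
  · simp [htop]
  have hα0 : 0 < α := hα ▸ sub_one_div_mul_rpow_pos hp hσ
  have hCp0 : 0 ≤ Cp := hCp ▸ Real.rpow_nonneg (div_nonneg (by linarith) (by linarith)) _
  have hgp : IntegrableOn (fun t ↦ |g t| ^ p) (Icc 0 b) := (lintegral_ofReal_ne_top_iff_integrable
    ((continuous_abs.rpow_const fun _ ↦ Or.inr (by linarith)).comp_aestronglyMeasurable hg.1)
    (.of_forall fun _ ↦ by positivity)).1 htop
  have hu : ContinuousOn u (Icc 0 b) := by
    rw [← uIcc_of_le hb.le] at hg hac ⊢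
    exact (continuousOn_const.add (intervalIntegral.continuousOn_primitive_interval hg)).congr hac
  have hu_div_nonneg : ∀ t ∈ Icc 0 b, 0 ≤ |u t| ^ p / (t + α) ^ p := fun t ht ↦
    div_nonneg (by positivity) (Real.rpow_nonneg (by linarith [ht.1]) p)
  rw [ge_iff_le,
    lintegral_Icc_ofReal_eq_ofReal_intervalIntegral hb.le hgp fun _ _ ↦ by positivity,
    lintegral_Icc_ofReal_eq_ofReal_intervalIntegral hb.le (hu.abs_rpow_div_add_rpow (by linarith)
      fun t ht ↦ by linarith [ht.1]).integrableOn_Icc hu_div_nonneg,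
    lintegral_Icc_ofReal_eq_ofReal_intervalIntegral hb.le
      (hu.abs.rpow_const fun _ _ ↦ Or.inr (by linarith)).integrableOn_Icc
      fun _ _ ↦ by positivity]
  exact ENNReal.ofReal_mul_add_ofReal_mul_le hCp0
    (intervalIntegral.integral_nonneg hb.le hu_div_nonneg)
    (div_nonneg (mul_nonneg (by linarith) hCp0) (Real.rpow_nonneg (by linarith) p))
    (intervalIntegral.integral_nonneg hb.le fun _ _ ↦ by positivity)
    (hardy_robin_inequality_of_eq_integral hp hb.le hσ hα hCp
      ((intervalIntegrable_iff_integrableOn_Icc_of_le hb.le).2 hg)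
      ((intervalIntegrable_iff_integrableOn_Icc_of_le hb.le).2 hgp) hac)
end

section
/- Let Ω ⊂ ℝ^n be an open bounded convex domain with boundary ∂Ω of class C^2, and for a positive constant σ > 0 let λ_p(Ω,σ) be the Robin–Hardy variational quantity with the constant boundary function σ. Then λ_p(Ω,σ) → +∞ as σ → 0+. -/
open MeasureTheory Metric Set Filter Bornology
open scoped ENNReal Topology

noncomputable section

namespace RobinHardy

/-- Distance to the boundary of `Ω`. -/
def sdist {n : ℕ} (Ω : Set (EuclideanSpace ℝ (Fin n))) (x : EuclideanSpace ℝ (Fin n)) : ℝ :=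
  Metric.infDist x (frontier Ω)

/-- The in-radius of `Ω`, i.e. `sup_{x ∈ Ω} dist(x, ∂Ω)`. -/
def inradius {n : ℕ} (Ω : Set (EuclideanSpace ℝ (Fin n))) : ℝ :=
  sSup (sdist Ω '' Ω)

/-- The surface measure on `∂Ω`: the `(n-1)`-dimensional Hausdorff measure restricted
to the boundary of `Ω`. -/
def surf {n : ℕ} (Ω : Set (EuclideanSpace ℝ (Fin n))) :
    Measure (EuclideanSpace ℝ (Fin n)) :=
  (Measure.hausdorffMeasure ((n : ℝ) - 1)).restrict (frontier Ω)

/-- `Ω` has boundary of class `C²`: near every boundary point, `Ω` is a sublevel set of a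
`C²` function with non-vanishing differential. -/
def HasC2Boundary {n : ℕ} (Ω : Set (EuclideanSpace ℝ (Fin n))) : Prop :=
  ∀ x ∈ frontier Ω, ∃ (U : Set (EuclideanSpace ℝ (Fin n)))
    (f : EuclideanSpace ℝ (Fin n) → ℝ), IsOpen U ∧ x ∈ U ∧ ContDiff ℝ 2 f ∧
      (∀ y ∈ U, fderiv ℝ f y ≠ 0) ∧ Ω ∩ U = {y ∈ U | f y < 0} ∧
      frontier Ω ∩ U = {y ∈ U | f y = 0}

/-- Membership in `W^{1,p}(Ω)`, realized via functions continuous up to the boundary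
(providing the boundary trace), differentiable in `Ω`, with finite `L^p`-integrals of the
function and of its gradient. -/
def MemW1p {n : ℕ} (p : ℝ) (Ω : Set (EuclideanSpace ℝ (Fin n)))
    (u : EuclideanSpace ℝ (Fin n) → ℝ) : Prop :=
  ContinuousOn u (closure Ω) ∧ (∀ x ∈ Ω, DifferentiableAt ℝ u x) ∧
    (∫⁻ x in Ω, ENNReal.ofReal (|u x| ^ p)) ≠ ∞ ∧
    (∫⁻ x in Ω, ENNReal.ofReal (‖fderiv ℝ u x‖ ^ p)) ≠ ∞

/-- The `p`-th power of the `W^{1,p}(Ω)`-distance between two functions. -/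
def W1pDist {n : ℕ} (p : ℝ) (Ω : Set (EuclideanSpace ℝ (Fin n)))
    (u v : EuclideanSpace ℝ (Fin n) → ℝ) : ℝ≥0∞ :=
  (∫⁻ x in Ω, ENNReal.ofReal (|u x - v x| ^ p)) +
    ∫⁻ x in Ω, ENNReal.ofReal (‖fderiv ℝ u x - fderiv ℝ v x‖ ^ p)

/-- Membership in `W^{1,p}_{0,Γ}(Ω)`: the closure, in the `W^{1,p}(Ω)`-norm, of the set of
`C¹` functions vanishing on `Γ`. -/
def MemW1pGamma {n : ℕ} (p : ℝ) (Ω Γ : Set (EuclideanSpace ℝ (Fin n)))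
    (u : EuclideanSpace ℝ (Fin n) → ℝ) : Prop :=
  MemW1p p Ω u ∧ ∃ v : ℕ → EuclideanSpace ℝ (Fin n) → ℝ,
    (∀ j, ContDiff ℝ 1 (v j)) ∧ (∀ j, ∀ x ∈ Γ, v j x = 0) ∧
      Tendsto (fun j => W1pDist p Ω (v j) u) atTop (𝓝 0)

/-- Membership in `W^{1,p}_0(Ω)`: the closure of `C_c^∞(Ω)` in the `W^{1,p}(Ω)`-norm. -/
def MemW1p0 {n : ℕ} (p : ℝ) (Ω : Set (EuclideanSpace ℝ (Fin n)))
    (u : EuclideanSpace ℝ (Fin n) → ℝ) : Prop :=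
  MemW1p p Ω u ∧ ∃ v : ℕ → EuclideanSpace ℝ (Fin n) → ℝ,
    (∀ j, ContDiff ℝ (⊤ : ℕ∞) (v j) ∧ HasCompactSupport (v j) ∧ tsupport (v j) ⊆ Ω) ∧
      Tendsto (fun j => W1pDist p Ω (v j) u) atTop (𝓝 0)

/-- The class `Σ_Γ` of boundary functions: `σ = +∞` on `Γ` and `σ` essentially bounded
on `∂Ω \ cl(Γ)`. -/
def SigmaGamma {n : ℕ} (Ω Γ : Set (EuclideanSpace ℝ (Fin n)))
    (σ : EuclideanSpace ℝ (Fin n) → ℝ≥0∞) : Prop :=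
  (∀ y ∈ Γ, σ y = ∞) ∧
    essSup σ ((surf Ω).restrict (frontier Ω \ closure Γ)) ≠ ∞

/-- `α(x) = ((p-1)/p)·σ(π(x))^{1/(1-p)}`, where `π` is a nearest-point projection onto `∂Ω`
(with the conventions `α(x) = 0` when `σ(π(x)) = ∞` and `α(x) = ∞` when `σ(π(x)) = 0`,
built into the `ℝ≥0∞`-valued power). -/
def alphaF {n : ℕ} (p : ℝ) (σ : EuclideanSpace ℝ (Fin n) → ℝ≥0∞)
    (π : EuclideanSpace ℝ (Fin n) → EuclideanSpace ℝ (Fin n))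
    (x : EuclideanSpace ℝ (Fin n)) : ℝ≥0∞ :=
  ENNReal.ofReal ((p - 1) / p) * σ (π x) ^ (1 / (1 - p))

/-- The weighted norm `‖u‖_{p,σ}^p = ∫_Ω |u(x)|^p/(δ(x)+α(x))^p dx`. -/
def wnorm {n : ℕ} (p : ℝ) (Ω : Set (EuclideanSpace ℝ (Fin n)))
    (σ : EuclideanSpace ℝ (Fin n) → ℝ≥0∞)
    (π : EuclideanSpace ℝ (Fin n) → EuclideanSpace ℝ (Fin n))
    (u : EuclideanSpace ℝ (Fin n) → ℝ) : ℝ≥0∞ :=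
  ∫⁻ x in Ω, ENNReal.ofReal (|u x| ^ p) /
    (ENNReal.ofReal (sdist Ω x) + alphaF p σ π x) ^ p

/-- The Robin functional `Q_p[σ,u] = ∫_Ω |∇u|^p dx + ∫_{∂Ω} σ|u|^p dν`, the boundary
integral being taken over the set where `σ` is finite. -/
def Qp {n : ℕ} (p : ℝ) (Ω : Set (EuclideanSpace ℝ (Fin n)))
    (σ : EuclideanSpace ℝ (Fin n) → ℝ≥0∞)
    (u : EuclideanSpace ℝ (Fin n) → ℝ) : ℝ≥0∞ :=
  (∫⁻ x in Ω, ENNReal.ofReal (‖fderiv ℝ u x‖ ^ p)) +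
    ∫⁻ y in frontier Ω ∩ {y | σ y ≠ ∞}, σ y * ENNReal.ofReal (|u y| ^ p) ∂(surf Ω)

/-- The variational quantity `λ_p(Ω,σ) = inf { Q_p[σ,u]/‖u‖_{p,σ}^p : u ∈ W^{1,p}_{0,Γ}(Ω), u ≠ 0 }`. -/
def lam {n : ℕ} (p : ℝ) (Ω Γ : Set (EuclideanSpace ℝ (Fin n)))
    (σ : EuclideanSpace ℝ (Fin n) → ℝ≥0∞)
    (π : EuclideanSpace ℝ (Fin n) → EuclideanSpace ℝ (Fin n)) : ℝ≥0∞ :=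
  ⨅ (u : EuclideanSpace ℝ (Fin n) → ℝ) (_ : MemW1pGamma p Ω Γ u)
    (_ : wnorm p Ω σ π u ≠ 0), Qp p Ω σ u / wnorm p Ω σ π u

/-- The variational quantity `λ_p(Ω,σ)` with the infimum over all of `W^{1,p}(Ω)`. -/
def lamAll {n : ℕ} (p : ℝ) (Ω : Set (EuclideanSpace ℝ (Fin n)))
    (σ : EuclideanSpace ℝ (Fin n) → ℝ≥0∞)
    (π : EuclideanSpace ℝ (Fin n) → EuclideanSpace ℝ (Fin n)) : ℝ≥0∞ :=
  ⨅ (u : EuclideanSpace ℝ (Fin n) → ℝ) (_ : MemW1p p Ω u)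
    (_ : wnorm p Ω σ π u ≠ 0), Qp p Ω σ u / wnorm p Ω σ π u

/-- `α = ((p-1)/p)·σ^{1/(1-p)}` for a constant boundary parameter `σ > 0`. -/
def alphaC (p σ : ℝ) : ℝ := ((p - 1) / p) * σ ^ (1 / (1 - p))

/-- `‖u‖_{p,σ}^p` for a constant boundary parameter `σ`. -/
def wnormC {n : ℕ} (p : ℝ) (Ω : Set (EuclideanSpace ℝ (Fin n))) (σ : ℝ)
    (u : EuclideanSpace ℝ (Fin n) → ℝ) : ℝ≥0∞ :=
  ∫⁻ x in Ω, ENNReal.ofReal (|u x| ^ p / (sdist Ω x + alphaC p σ) ^ p)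

/-- `Q_p[σ,u]` for a constant boundary parameter `σ`. -/
def QpC {n : ℕ} (p : ℝ) (Ω : Set (EuclideanSpace ℝ (Fin n))) (σ : ℝ)
    (u : EuclideanSpace ℝ (Fin n) → ℝ) : ℝ≥0∞ :=
  (∫⁻ x in Ω, ENNReal.ofReal (‖fderiv ℝ u x‖ ^ p)) +
    ENNReal.ofReal σ * ∫⁻ y, ENNReal.ofReal (|u y| ^ p) ∂(surf Ω)

/-- `λ_p(Ω,σ)` for a constant boundary parameter `σ`. -/
def lamC {n : ℕ} (p : ℝ) (Ω : Set (EuclideanSpace ℝ (Fin n))) (σ : ℝ) : ℝ≥0∞ :=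
  ⨅ (u : EuclideanSpace ℝ (Fin n) → ℝ) (_ : MemW1p p Ω u)
    (_ : wnormC p Ω σ u ≠ 0), QpC p Ω σ u / wnormC p Ω σ u

/-!
Slice the bounded convex domain `Ω` by lines parallel to the first coordinate axis: each nonempty
slice is an interval `(a, b)` with `b - a ≤ diam Ω` whose lower endpoint lies on `∂Ω`. On a slice,
the fundamental theorem of calculus and Hölder's inequality bound `∫ |u|^p` by `|u(a)|^p` and
`∫ |∇u|^p`. Integrating over the slices, and using that the lower boundary point projects
`1`-Lipschitz onto the hyperplane `x₀ = 0` (so the surface measure of `∂Ω` dominates the Lebesgue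
measure of the shadow), gives the trace–Poincaré inequality
`∫_Ω |u|^p ≤ C (∫_{∂Ω} |u|^p dν + ∫_Ω |∇u|^p)`.
As `δ ≥ 0`, `‖u‖_{p,σ}^p ≤ α^{-p} ∫_Ω |u|^p`, and for `σ ≤ 1` the bracket is at most `Q_p[σ,u] / σ`;
hence `λ_p(Ω,σ) ≥ σ α^p / C = c σ^{1/(1-p)}`, which tends to `∞` as `σ → 0+`.
-/
def finConsEquiv (m : ℕ) : (ℝ × (Fin m → ℝ)) ≃ᵐ EuclideanSpace ℝ (Fin (m + 1)) :=
  (MeasurableEquiv.piFinSuccAbove (fun _ => ℝ) 0).symm.trans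
    (MeasurableEquiv.toLp 2 (Fin (m + 1) → ℝ))

namespace finConsEquiv

variable {m : ℕ}

theorem measurePreserving (m : ℕ) : MeasurePreserving (finConsEquiv m) :=
  (EuclideanSpace.volume_preserving_symm_measurableEquiv_toLp (Fin (m + 1))).symm.comp
    ((volume_preserving_piFinSuccAbove (fun _ : Fin (m + 1) => ℝ) 0).symm _)

@[simp]
theorem apply_zero (t : ℝ) (y : Fin m → ℝ) : finConsEquiv m (t, y) 0 = t := by
  simp [finConsEquiv]

@[simp]
theorem apply_succ (t : ℝ) (y : Fin m → ℝ) (j : Fin m) : finConsEquiv m (t, y) j.succ = y j := by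
  simp [finConsEquiv]

theorem eq_add_smul (t : ℝ) (y : Fin m → ℝ) :
    finConsEquiv m (t, y) = finConsEquiv m (0, y) + t • EuclideanSpace.single 0 1 := by
  ext i
  refine Fin.cases ?_ (fun j => ?_) i <;> simp [Fin.succ_ne_zero]

theorem hasDerivAt_line (t : ℝ) (y : Fin m → ℝ) :
    HasDerivAt (fun s => finConsEquiv m (s, y)) (EuclideanSpace.single 0 1) t := by
  have h := ((hasDerivAt_id t).smul_const (EuclideanSpace.single 0 (1 : ℝ))).const_add
    (finConsEquiv m (0, y))
  rw [one_smul] at h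
  exact h.congr_of_eventuallyEq (Eventually.of_forall fun s => eq_add_smul s y)

theorem isometry_line (y : Fin m → ℝ) : Isometry fun t => finConsEquiv m (t, y) :=
  Isometry.of_dist_eq fun t s => by
    rw [dist_eq_norm, eq_add_smul t, eq_add_smul s, add_sub_add_left_eq_sub, ← sub_smul,
      norm_smul, PiLp.norm_single, norm_one, mul_one, Real.dist_eq, Real.norm_eq_abs]

protected theorem continuous (m : ℕ) : Continuous (finConsEquiv m) :=
  (PiLp.continuous_toLp 2 _).comp
    (_root_.continuous_fst.finInsertNth (A := fun _ => ℝ) 0 _root_.continuous_snd :)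

end finConsEquiv

def euclideanTail (m : ℕ) (x : EuclideanSpace ℝ (Fin (m + 1))) : Fin m → ℝ := fun j => x j.succ

@[simp]
theorem euclideanTail_finConsEquiv {m : ℕ} (t : ℝ) (y : Fin m → ℝ) :
    euclideanTail m (finConsEquiv m (t, y)) = y :=
  funext fun j => finConsEquiv.apply_succ t y j

theorem lipschitzWith_euclideanTail (m : ℕ) : LipschitzWith 1 (euclideanTail m) := by
  refine LipschitzWith.of_dist_le_mul fun x y => ?_
  rw [NNReal.coe_one, one_mul, dist_pi_le_iff dist_nonneg]
  intro j
  exact PiLp.dist_apply_le x y j.succ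

theorem lintegral_eq_lintegral_lintegral_finConsEquiv {m : ℕ}
    {F : EuclideanSpace ℝ (Fin (m + 1)) → ℝ≥0∞} (hF : Measurable F) :
    ∫⁻ x, F x = ∫⁻ y, ∫⁻ t, F (finConsEquiv m (t, y)) := by
  rw [← (finConsEquiv.measurePreserving m).lintegral_comp_emb (finConsEquiv m).measurableEmbedding,
    Measure.volume_eq_prod]
  exact lintegral_prod_symm _ (hF.comp (finConsEquiv m).measurable).aemeasurable

theorem map_volume_restrict_le_hausdorffMeasure {m : ℕ} {X : Type*} [EMetricSpace X]
    [MeasurableSpace X] [BorelSpace X] {π : X → Fin m → ℝ} (hπ : LipschitzWith 1 π)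
    {G : (Fin m → ℝ) → X} (hG : Measurable G) {S : Set (Fin m → ℝ)}
    {F : Set X} (hGF : MapsTo G S F) (hπG : ∀ y ∈ S, π (G y) = y) :
    Measure.map G (volume.restrict S) ≤ (μH[m] : Measure X).restrict F := by
  refine Measure.le_iff.2 fun A hA => ?_
  have hproj : G ⁻¹' A ∩ S = π '' (A ∩ G '' S) := by
    ext y
    constructor
    · rintro ⟨hyA, hyS⟩
      exact ⟨G y, ⟨hyA, mem_image_of_mem G hyS⟩, hπG y hyS⟩
    · rintro ⟨_, ⟨hxA, ⟨y, hyS, rfl⟩⟩, rfl⟩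
      rw [hπG y hyS]
      exact ⟨hxA, hyS⟩
  rw [Measure.map_apply hG hA, Measure.restrict_apply (hG hA), Measure.restrict_apply hA, hproj,
    ← hausdorffMeasure_pi_real, Fintype.card_fin]
  calc μH[m] (π '' (A ∩ G '' S)) ≤ 1 ^ (m : ℝ) * μH[m] (A ∩ G '' S) :=
        hπ.hausdorffMeasure_image_le (Nat.cast_nonneg m) _
    _ ≤ μH[m] (A ∩ F) := by
        rw [ENNReal.one_rpow, one_mul]
        exact measure_mono (inter_subset_inter_right A (image_subset_iff.2 hGF))

theorem lintegral_rpow_le_measure_univ_mul {α : Type*} [MeasurableSpace α] {μ : Measure α}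
    {p : ℝ} (hp : 1 < p) {f : α → ℝ≥0∞} (hf : AEMeasurable f μ) :
    (∫⁻ x, f x ∂μ) ^ p ≤ μ univ ^ (p - 1) * ∫⁻ x, f x ^ p ∂μ := by
  have hpq := Real.HolderConjugate.conjExponent hp
  have hp0 : 0 < p := zero_lt_one.trans hp
  have holder := ENNReal.lintegral_mul_le_Lp_mul_Lq μ hpq hf (aemeasurable_const (b := 1))
  simp only [Pi.mul_apply, mul_one, ENNReal.one_rpow, lintegral_const, one_mul] at holder
  calc (∫⁻ x, f x ∂μ) ^ p
      ≤ ((∫⁻ x, f x ^ p ∂μ) ^ (1 / p) * μ univ ^ (1 / p.conjExponent)) ^ p :=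
        ENNReal.rpow_le_rpow holder hp0.le
    _ = μ univ ^ (p - 1) * ∫⁻ x, f x ^ p ∂μ := by
        rw [ENNReal.mul_rpow_of_nonneg _ _ hp0.le, ← ENNReal.rpow_mul, ← ENNReal.rpow_mul,
          one_div_mul_cancel hp0.ne', ENNReal.rpow_one, mul_comm, Real.conjExponent]
        congr 2
        field_simp [(sub_pos.2 hp).ne']

theorem ofReal_abs_sub_le_lintegral {w w' G : ℝ → ℝ} {s t : ℝ} (hst : s ≤ t)
    (hw : ContinuousOn w (Icc s t)) (hw' : ∀ r ∈ Ioo s t, HasDerivAt w (w' r) r)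
    (hG : AEMeasurable G (volume.restrict (Ioo s t))) (hbound : ∀ r ∈ Ioo s t, |w' r| ≤ G r) :
    ENNReal.ofReal |w t - w s| ≤ ∫⁻ r in Ioo s t, ENNReal.ofReal (G r) := by
  by_cases htop : ∫⁻ r in Ioo s t, ENNReal.ofReal (G r) = ∞
  · exact htop ▸ le_top
  have hG0 : 0 ≤ᵐ[volume.restrict (Ioo s t)] G := (ae_restrict_iff' measurableSet_Ioo).2
    (Eventually.of_forall fun r hr => (abs_nonneg _).trans (hbound r hr))
  have hGint : IntegrableOn G (Icc s t) := by
    rw [integrableOn_Icc_iff_integrableOn_Ioo]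
    exact (lintegral_ofReal_ne_top_iff_integrable hG.aestronglyMeasurable hG0).1 htop
  have hderiv (f f' : ℝ → ℝ) (hf : ∀ r ∈ Ioo s t, HasDerivAt f (f' r) r) :
      ∀ r ∈ Ioo s t, HasDerivWithinAt f (f' r) (Ioi r) r :=
    fun r hr => (hf r hr).hasDerivWithinAt
  have hup := intervalIntegral.sub_le_integral_of_hasDeriv_right_of_le hst hw
    (hderiv w w' hw') hGint fun r hr => (le_abs_self _).trans (hbound r hr)
  have hdown := intervalIntegral.sub_le_integral_of_hasDeriv_right_of_le hst hw.neg
    (hderiv _ _ fun r hr => (hw' r hr).neg) hGint fun r hr => (neg_le_abs _).trans (hbound r hr)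
  rw [intervalIntegral.integral_of_le hst, integral_Ioc_eq_integral_Ioo] at hup hdown
  rw [← ofReal_integral_eq_lintegral_ofReal (hGint.mono_set Ioo_subset_Icc_self) hG0]
  simp only [Pi.neg_apply] at hdown
  exact ENNReal.ofReal_le_ofReal (abs_le.2 ⟨by linarith, hup⟩)

theorem lintegral_Ioo_rpow_le {p : ℝ} (hp : 1 < p) {w w' G : ℝ → ℝ} {a b : ℝ}
    (hw : ContinuousOn w (Ico a b)) (hw' : ∀ t ∈ Ioo a b, HasDerivAt w (w' t) t)
    (hG : AEMeasurable G (volume.restrict (Ioo a b))) (hbound : ∀ t ∈ Ioo a b, |w' t| ≤ G t) :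
    ∫⁻ t in Ioo a b, ENNReal.ofReal (|w t| ^ p) ≤
      2 ^ (p - 1) * (ENNReal.ofReal (b - a) * ENNReal.ofReal (|w a| ^ p) +
        ENNReal.ofReal (b - a) ^ p * ∫⁻ t in Ioo a b, ENNReal.ofReal (G t ^ p)) := by
  have hp0 : 0 < p := zero_lt_one.trans hp
  set A := ∫⁻ t in Ioo a b, ENNReal.ofReal (G t)
  set J := ∫⁻ t in Ioo a b, ENNReal.ofReal (G t ^ p)
  have hw_le : ∀ t ∈ Ioo a b, ENNReal.ofReal |w t| ≤ ENNReal.ofReal |w a| + A := by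
    intro t ht
    have hsub : Ioo a t ⊆ Ioo a b := Ioo_subset_Ioo_right ht.2.le
    calc ENNReal.ofReal |w t| ≤ ENNReal.ofReal (|w a| + |w t - w a|) :=
          ENNReal.ofReal_le_ofReal (by linarith [abs_sub_abs_le_abs_sub (w t) (w a)])
      _ = ENNReal.ofReal |w a| + ENNReal.ofReal |w t - w a| :=
          ENNReal.ofReal_add (abs_nonneg _) (abs_nonneg _)
      _ ≤ ENNReal.ofReal |w a| + ∫⁻ r in Ioo a t, ENNReal.ofReal (G r) := by
          gcongr
          exact ofReal_abs_sub_le_lintegral ht.1.le (hw.mono (Icc_subset_Ico_right ht.2))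
            (fun r hr => hw' r (hsub hr)) (hG.mono_measure (Measure.restrict_mono hsub le_rfl))
            (fun r hr => hbound r (hsub hr))
      _ ≤ ENNReal.ofReal |w a| + A := by gcongr; exact lintegral_mono_set hsub
  have hA : A ^ p ≤ ENNReal.ofReal (b - a) ^ (p - 1) * J := by
    have h := lintegral_rpow_le_measure_univ_mul hp hG.ennreal_ofReal
    rwa [Measure.restrict_apply_univ, Real.volume_Ioo,
      setLIntegral_congr_fun measurableSet_Ioo fun t ht => ENNReal.ofReal_rpow_of_nonneg
        ((abs_nonneg _).trans (hbound t ht)) hp0.le] at h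
  calc ∫⁻ t in Ioo a b, ENNReal.ofReal (|w t| ^ p)
      ≤ ∫⁻ _ in Ioo a b, 2 ^ (p - 1) * (ENNReal.ofReal (|w a| ^ p) + A ^ p) := by
        refine setLIntegral_mono measurable_const fun t ht => ?_
        rw [← ENNReal.ofReal_rpow_of_nonneg (abs_nonneg _) hp0.le,
          ← ENNReal.ofReal_rpow_of_nonneg (abs_nonneg _) hp0.le]
        exact (ENNReal.rpow_le_rpow (hw_le t ht) hp0.le).trans
          (ENNReal.rpow_add_le_mul_rpow_add_rpow _ _ hp.le)
    _ ≤ ENNReal.ofReal (b - a) * (2 ^ (p - 1) *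
          (ENNReal.ofReal (|w a| ^ p) + ENNReal.ofReal (b - a) ^ (p - 1) * J)) := by
        rw [setLIntegral_const, Real.volume_Ioo, mul_comm]
        gcongr
    _ = _ := by
        have hpow : ENNReal.ofReal (b - a) ^ p =
            ENNReal.ofReal (b - a) * ENNReal.ofReal (b - a) ^ (p - 1) := by
          conv_lhs => rw [← add_sub_cancel 1 p]
          rw [ENNReal.rpow_add_of_nonneg _ _ zero_le_one (sub_nonneg.2 hp.le), ENNReal.rpow_one]
        rw [hpow]
        ring

section LineSections

variable {m : ℕ} {Ω : Set (EuclideanSpace ℝ (Fin (m + 1)))}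

def lineSection (Ω : Set (EuclideanSpace ℝ (Fin (m + 1)))) (y : Fin m → ℝ) : Set ℝ :=
  (fun t => finConsEquiv m (t, y)) ⁻¹' Ω

def shadow (Ω : Set (EuclideanSpace ℝ (Fin (m + 1)))) : Set (Fin m → ℝ) :=
  {y | (lineSection Ω y).Nonempty}

def lowerEndpoint (Ω : Set (EuclideanSpace ℝ (Fin (m + 1)))) (y : Fin m → ℝ) : ℝ :=
  sInf (lineSection Ω y)

theorem isOpen_lineSection (hΩ : IsOpen Ω) (y : Fin m → ℝ) : IsOpen (lineSection Ω y) :=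
  hΩ.preimage (finConsEquiv.isometry_line y).continuous

theorem isBounded_lineSection (hbd : IsBounded Ω) (y : Fin m → ℝ) :
    IsBounded (lineSection Ω y) :=
  (finConsEquiv.isometry_line y).antilipschitz.isBounded_preimage hbd

theorem diam_lineSection_le (hbd : IsBounded Ω) (y : Fin m → ℝ) :
    diam (lineSection Ω y) ≤ diam Ω := by
  rw [← (finConsEquiv.isometry_line y).diam_image]
  exact diam_mono (image_preimage_subset _ _) hbd

theorem convex_lineSection (hconv : Convex ℝ Ω) (y : Fin m → ℝ) :
    Convex ℝ (lineSection Ω y) := by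
  intro t ht s hs a b ha hb hab
  have hcomb : finConsEquiv m (a * t + b * s, y) =
      a • finConsEquiv m (t, y) + b • finConsEquiv m (s, y) := by
    rw [finConsEquiv.eq_add_smul (a * t + b * s), finConsEquiv.eq_add_smul t,
      finConsEquiv.eq_add_smul s]
    linear_combination (norm := module) -hab • finConsEquiv m (0, y)
  show finConsEquiv m (a * t + b * s, y) ∈ Ω
  rw [hcomb]
  exact hconv ht hs ha hb hab

theorem lineSection_eq_Ioo (hΩ : IsOpen Ω) (hbd : IsBounded Ω) (hconv : Convex ℝ Ω)
    {y : Fin m → ℝ} (hy : y ∈ shadow Ω) :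
    lineSection Ω y = Ioo (lowerEndpoint Ω y) (sSup (lineSection Ω y)) := by
  have hb := isBounded_lineSection hbd y
  refine Subset.antisymm (fun t ht => ?_) ?_
  · have hnhds : ∀ᶠ s in 𝓝 t, s ∈ lineSection Ω y := (isOpen_lineSection hΩ y).mem_nhds ht
    obtain ⟨t₁, ht₁, hmem₁⟩ := hnhds.exists_lt
    obtain ⟨t₂, ht₂, hmem₂⟩ := hnhds.exists_gt
    exact ⟨(csInf_le hb.bddBelow hmem₁).trans_lt ht₁, ht₂.trans_le (le_csSup hb.bddAbove hmem₂)⟩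
  · exact ((convex_lineSection hconv y).isConnected hy).Ioo_csInf_csSup_subset hb.bddBelow
      hb.bddAbove

theorem isOpen_shadow (hΩ : IsOpen Ω) : IsOpen (shadow Ω) := by
  have : shadow Ω = Prod.snd '' (finConsEquiv m ⁻¹' Ω) := by
    ext y
    exact ⟨fun ⟨t, ht⟩ => ⟨(t, y), ht, rfl⟩, fun ⟨⟨t, _⟩, ht, hy⟩ => ⟨t, hy ▸ ht⟩⟩
  rw [this]
  exact isOpenMap_snd _ (hΩ.preimage (finConsEquiv.continuous m))

theorem measurable_lowerEndpoint (hΩ : IsOpen Ω) (hbd : IsBounded Ω) :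
    Measurable (lowerEndpoint Ω) := by
  refine measurable_of_Iio fun c => ?_
  have hset : lowerEndpoint Ω ⁻¹' Iio c =
      Prod.snd '' (finConsEquiv m ⁻¹' Ω ∩ Iio c ×ˢ univ) ∪ (shadow Ω)ᶜ ∩ {_y | 0 < c} := by
    ext y
    by_cases hy : y ∈ shadow Ω
    · simp only [mem_preimage, mem_Iio, lowerEndpoint, csInf_lt_iff
        (isBounded_lineSection hbd y).bddBelow hy]
      simp [hy, lineSection, and_comm]
    · -- off the shadow, `lowerEndpoint` takes the junk value `sInf ∅ = 0`
      have hnotin : ∀ t, finConsEquiv m (t, y) ∉ Ω := fun t ht => hy ⟨t, ht⟩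
      simp [lowerEndpoint, not_nonempty_iff_eq_empty.1 hy, hy, hnotin]
  rw [hset]
  refine (IsOpen.measurableSet ?_).union ((isOpen_shadow hΩ).measurableSet.compl.inter
    (MeasurableSet.const _))
  exact isOpenMap_snd _ ((hΩ.preimage (finConsEquiv.continuous m)).inter
    (isOpen_Iio.prod isOpen_univ))

theorem lowerEndpoint_mem_frontier (hΩ : IsOpen Ω) (hbd : IsBounded Ω) (hconv : Convex ℝ Ω)
    {y : Fin m → ℝ} (hy : y ∈ shadow Ω) :
    finConsEquiv m (lowerEndpoint Ω y, y) ∈ frontier Ω := by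
  refine ⟨(finConsEquiv.isometry_line y).continuous.closure_preimage_subset Ω
    (csInf_mem_closure hy (isBounded_lineSection hbd y).bddBelow), ?_⟩
  rw [hΩ.interior_eq]
  intro hmem
  have : lowerEndpoint Ω y ∈ lineSection Ω y := hmem
  rw [lineSection_eq_Ioo hΩ hbd hconv hy] at this
  exact lt_irrefl _ this.1

end LineSections

def poincareConst {X : Type*} [PseudoMetricSpace X] (p : ℝ) (Ω : Set X) : ℝ≥0∞ :=
  2 ^ (p - 1) * ENNReal.ofReal (max (diam Ω) 1) ^ p

theorem poincareConst_ne_top {X : Type*} [PseudoMetricSpace X] {p : ℝ} (hp : 1 ≤ p)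
    (Ω : Set X) : poincareConst p Ω ≠ ∞ :=
  ENNReal.mul_ne_top (ENNReal.rpow_ne_top_of_nonneg (sub_nonneg.2 hp) ENNReal.ofNat_ne_top)
    (ENNReal.rpow_ne_top_of_nonneg (zero_le_one.trans hp) ENNReal.ofReal_ne_top)

section Poincare

variable {m : ℕ} {Ω : Set (EuclideanSpace ℝ (Fin (m + 1)))} {p : ℝ}

theorem lintegral_lineSection_rpow_le (hp : 1 < p) (hΩ : IsOpen Ω) (hbd : IsBounded Ω)
    (hconv : Convex ℝ Ω) {v : EuclideanSpace ℝ (Fin (m + 1)) → ℝ}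
    (hv : ContinuousOn v (closure Ω)) (hv' : ∀ x ∈ Ω, DifferentiableAt ℝ v x)
    {y : Fin m → ℝ} (hy : y ∈ shadow Ω) :
    ∫⁻ t in lineSection Ω y, ENNReal.ofReal (|v (finConsEquiv m (t, y))| ^ p) ≤
      poincareConst p Ω * (ENNReal.ofReal (|v (finConsEquiv m (lowerEndpoint Ω y, y))| ^ p) +
        ∫⁻ t in lineSection Ω y, ENNReal.ofReal (‖fderiv ℝ v (finConsEquiv m (t, y))‖ ^ p)) := by
  have hp0 : 0 < p := zero_lt_one.trans hp
  set a := lowerEndpoint Ω y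
  set line := fun t => finConsEquiv m (t, y)
  have hline := (finConsEquiv.isometry_line (m := m) y).continuous
  obtain ⟨b, hsec⟩ : ∃ b, lineSection Ω y = Ioo a b := ⟨_, lineSection_eq_Ioo hΩ hbd hconv hy⟩
  have hab : a < b := nonempty_Ioo.1 (hsec ▸ hy)
  have hba : b - a ≤ max (diam Ω) 1 := by
    rw [← Real.diam_Ioo hab.le, ← hsec]
    exact (diam_lineSection_le hbd y).trans (le_max_left _ _)
  have hclosure : MapsTo line (Ico a b) (closure Ω) := fun t ht =>
    hline.closure_preimage_subset Ω <| by
      rw [← lineSection, hsec, closure_Ioo hab.ne]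
      exact Ico_subset_Icc_self ht
  have h1d := lintegral_Ioo_rpow_le hp (w := v ∘ line)
    (w' := fun t => fderiv ℝ v (line t) (EuclideanSpace.single 0 1))
    (G := fun t => ‖fderiv ℝ v (line t)‖) (hv.comp hline.continuousOn hclosure)
    (fun t ht => (hv' _ (hsec ▸ ht : t ∈ lineSection Ω y)).hasFDerivAt.comp_hasDerivAt t
      (finConsEquiv.hasDerivAt_line t y))
    ((measurable_fderiv ℝ v).norm.comp hline.measurable).aemeasurable
    (fun t _ => by
      simpa [PiLp.norm_single] using (fderiv ℝ v (line t)).le_opNorm (EuclideanSpace.single 0 1))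
  rw [hsec]
  have hD : ENNReal.ofReal (b - a) ^ p ≤ ENNReal.ofReal (max (diam Ω) 1) ^ p :=
    ENNReal.rpow_le_rpow (ENNReal.ofReal_le_ofReal hba) hp0.le
  have hD' : ENNReal.ofReal (b - a) ≤ ENNReal.ofReal (max (diam Ω) 1) ^ p := by
    rw [ENNReal.ofReal_rpow_of_nonneg (by positivity) hp0.le]
    exact ENNReal.ofReal_le_ofReal
      (hba.trans (Real.self_le_rpow_of_one_le (le_max_right _ _) hp.le))
  simp only [Function.comp_apply, line] at h1d ⊢
  calc _ ≤ _ := h1d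
    _ ≤ 2 ^ (p - 1) * (ENNReal.ofReal (max (diam Ω) 1) ^ p *
          ENNReal.ofReal (|v (finConsEquiv m (a, y))| ^ p) +
        ENNReal.ofReal (max (diam Ω) 1) ^ p *
          ∫⁻ t in Ioo a b, ENNReal.ofReal (‖fderiv ℝ v (finConsEquiv m (t, y))‖ ^ p)) := by
        gcongr
    _ = _ := by unfold poincareConst; ring

theorem setLIntegral_eq_lintegral_shadow_lineSection (hΩ : IsOpen Ω)
    {f : EuclideanSpace ℝ (Fin (m + 1)) → ℝ≥0∞} (hf : Measurable f) :
    ∫⁻ x in Ω, f x = ∫⁻ y in shadow Ω, ∫⁻ t in lineSection Ω y, f (finConsEquiv m (t, y)) := by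
  rw [← lintegral_indicator hΩ.measurableSet,
    lintegral_eq_lintegral_lintegral_finConsEquiv (hf.indicator hΩ.measurableSet)]
  have hsection (y : Fin m → ℝ) : ∫⁻ t, Ω.indicator f (finConsEquiv m (t, y)) =
      ∫⁻ t in lineSection Ω y, f (finConsEquiv m (t, y)) := by
    rw [← lintegral_indicator (isOpen_lineSection hΩ y).measurableSet]
    rfl
  simp_rw [hsection]
  refine (setLIntegral_eq_of_support_subset fun y => not_imp_not.1 fun hy => ?_).symm
  rw [Function.notMem_support, show lineSection Ω y = ∅ from not_nonempty_iff_eq_empty.1 hy,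
    Measure.restrict_empty, lintegral_zero_measure]

theorem lintegral_shadow_le_lintegral_surf (hΩ : IsOpen Ω) (hbd : IsBounded Ω)
    (hconv : Convex ℝ Ω) {f : EuclideanSpace ℝ (Fin (m + 1)) → ℝ≥0∞} (hf : Measurable f) :
    ∫⁻ y in shadow Ω, f (finConsEquiv m (lowerEndpoint Ω y, y)) ≤ ∫⁻ x, f x ∂surf Ω := by
  have hG : Measurable fun y => finConsEquiv m (lowerEndpoint Ω y, y) :=
    (finConsEquiv m).measurable.comp ((measurable_lowerEndpoint hΩ hbd).prodMk measurable_id)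
  have hdim : ((m + 1 : ℕ) : ℝ) - 1 = m := by push_cast; ring
  rw [← lintegral_map hf hG, surf, hdim]
  exact lintegral_mono' (map_volume_restrict_le_hausdorffMeasure
    (lipschitzWith_euclideanTail m) hG
    (fun y hy => lowerEndpoint_mem_frontier hΩ hbd hconv hy) fun y _ => by simp) le_rfl

theorem setLIntegral_rpow_le_poincareConst_mul_of_measurable (hp : 1 < p) (hΩ : IsOpen Ω)
    (hbd : IsBounded Ω) (hconv : Convex ℝ Ω) {v : EuclideanSpace ℝ (Fin (m + 1)) → ℝ}
    (hvm : Measurable v) (hv : ContinuousOn v (closure Ω)) (hv' : ∀ x ∈ Ω, DifferentiableAt ℝ v x) :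
    ∫⁻ x in Ω, ENNReal.ofReal (|v x| ^ p) ≤ poincareConst p Ω *
      (∫⁻ x, ENNReal.ofReal (|v x| ^ p) ∂surf Ω +
        ∫⁻ x in Ω, ENNReal.ofReal (‖fderiv ℝ v x‖ ^ p)) := by
  have hf : Measurable fun x => ENNReal.ofReal (|v x| ^ p) :=
    (hvm.abs.pow_const p).ennreal_ofReal
  have hg : Measurable fun x => ENNReal.ofReal (‖fderiv ℝ v x‖ ^ p) :=
    ((measurable_fderiv ℝ v).norm.pow_const p).ennreal_ofReal
  rw [setLIntegral_eq_lintegral_shadow_lineSection hΩ hf,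
    setLIntegral_eq_lintegral_shadow_lineSection hΩ hg]
  calc _ ≤ ∫⁻ y in shadow Ω, poincareConst p Ω *
          (ENNReal.ofReal (|v (finConsEquiv m (lowerEndpoint Ω y, y))| ^ p) +
            ∫⁻ t in lineSection Ω y, ENNReal.ofReal (‖fderiv ℝ v (finConsEquiv m (t, y))‖ ^ p)) :=
        setLIntegral_mono' (isOpen_shadow hΩ).measurableSet fun y hy =>
          lintegral_lineSection_rpow_le hp hΩ hbd hconv hv hv' hy
    _ = poincareConst p Ω *
          ((∫⁻ y in shadow Ω, ENNReal.ofReal (|v (finConsEquiv m (lowerEndpoint Ω y, y))| ^ p)) +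
            ∫⁻ y in shadow Ω, ∫⁻ t in lineSection Ω y,
              ENNReal.ofReal (‖fderiv ℝ v (finConsEquiv m (t, y))‖ ^ p)) := by
        have hB : Measurable fun y =>
            ENNReal.ofReal (|v (finConsEquiv m (lowerEndpoint Ω y, y))| ^ p) :=
          hf.comp ((finConsEquiv m).measurable.comp
            ((measurable_lowerEndpoint hΩ hbd).prodMk measurable_id))
        rw [lintegral_const_mul' _ _ (poincareConst_ne_top hp.le Ω), lintegral_add_left hB]
    _ ≤ _ := by gcongr; exact lintegral_shadow_le_lintegral_surf hΩ hbd hconv hf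

theorem setLIntegral_rpow_le_poincareConst_mul (hp : 1 < p) (hΩ : IsOpen Ω) (hbd : IsBounded Ω)
    (hconv : Convex ℝ Ω) {u : EuclideanSpace ℝ (Fin (m + 1)) → ℝ}
    (hu : ContinuousOn u (closure Ω)) (hu' : ∀ x ∈ Ω, DifferentiableAt ℝ u x) :
    ∫⁻ x in Ω, ENNReal.ofReal (|u x| ^ p) ≤ poincareConst p Ω *
      (∫⁻ x, ENNReal.ofReal (|u x| ^ p) ∂surf Ω +
        ∫⁻ x in Ω, ENNReal.ofReal (‖fderiv ℝ u x‖ ^ p)) := by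
  classical
  obtain ⟨v, hvm, hvu⟩ : ∃ v, Measurable v ∧ EqOn v u (closure Ω) :=
    ⟨_, hu.measurable_piecewise (continuousOn_const (c := 0)) isClosed_closure.measurableSet,
      piecewise_eqOn _ _ _⟩
  have hvu_nhds {x} (hx : x ∈ Ω) : v =ᶠ[𝓝 x] u :=
    eventuallyEq_of_mem (hΩ.mem_nhds hx) fun y hy => hvu (subset_closure hy)
  have hv := setLIntegral_rpow_le_poincareConst_mul_of_measurable hp hΩ hbd hconv hvm (hu.congr hvu)
    fun x hx => (hu' x hx).congr_of_eventuallyEq (hvu_nhds hx)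
  have hΩ_eq : ∫⁻ x in Ω, ENNReal.ofReal (|v x| ^ p) = ∫⁻ x in Ω, ENNReal.ofReal (|u x| ^ p) :=
    setLIntegral_congr_fun hΩ.measurableSet fun x hx => by rw [hvu (subset_closure hx)]
  have hsurf_eq : ∫⁻ x, ENNReal.ofReal (|v x| ^ p) ∂surf Ω =
      ∫⁻ x, ENNReal.ofReal (|u x| ^ p) ∂surf Ω :=
    setLIntegral_congr_fun isClosed_frontier.measurableSet fun x hx => by
      rw [hvu (frontier_subset_closure hx)]
  have hgrad_eq : ∫⁻ x in Ω, ENNReal.ofReal (‖fderiv ℝ v x‖ ^ p) =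
      ∫⁻ x in Ω, ENNReal.ofReal (‖fderiv ℝ u x‖ ^ p) :=
    setLIntegral_congr_fun hΩ.measurableSet fun x hx => by rw [(hvu_nhds hx).fderiv_eq]
  rwa [hΩ_eq, hsurf_eq, hgrad_eq] at hv

end Poincare

theorem mul_alphaC_rpow {p σ : ℝ} (hp : 1 < p) (hσ : 0 < σ) :
    σ * alphaC p σ ^ p = ((p - 1) / p) ^ p * σ ^ (1 / (1 - p)) := by
  have hp0 : 0 < p := zero_lt_one.trans hp
  have hexp : 1 / (1 - p) * p = 1 / (1 - p) - 1 := by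
    field_simp [(sub_neg.2 hp).ne]
    ring
  rw [alphaC, Real.mul_rpow (div_pos (sub_pos.2 hp) hp0).le (Real.rpow_nonneg hσ.le _),
    ← Real.rpow_mul hσ.le, hexp, Real.rpow_sub_one hσ.ne']
  field_simp

section ConstantBoundaryParameter

variable {n : ℕ} {p σ : ℝ} {Ω : Set (EuclideanSpace ℝ (Fin n))}

theorem wnormC_le (hp : 0 ≤ p) (hα : 0 < alphaC p σ) (u : EuclideanSpace ℝ (Fin n) → ℝ) :
    wnormC p Ω σ u ≤
      ENNReal.ofReal (alphaC p σ ^ p)⁻¹ * ∫⁻ x in Ω, ENNReal.ofReal (|u x| ^ p) := by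
  rw [← lintegral_const_mul' _ _ ENNReal.ofReal_ne_top]
  refine lintegral_mono fun x => ?_
  rw [← ENNReal.ofReal_mul (inv_nonneg.2 (Real.rpow_nonneg hα.le p)), ← div_eq_inv_mul]
  gcongr
  exact le_add_of_nonneg_left infDist_nonneg

theorem mul_add_le_QpC (hσ : σ ≤ 1) (u : EuclideanSpace ℝ (Fin n) → ℝ) :
    ENNReal.ofReal σ * (∫⁻ x, ENNReal.ofReal (|u x| ^ p) ∂surf Ω +
      ∫⁻ x in Ω, ENNReal.ofReal (‖fderiv ℝ u x‖ ^ p)) ≤ QpC p Ω σ u := by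
  rw [QpC, mul_add, add_comm]
  gcongr
  exact mul_le_of_le_one_left' (ENNReal.ofReal_le_one.2 hσ)

end ConstantBoundaryParameter

theorem inv_poincareConst_mul_le_lamC {m : ℕ} {p σ : ℝ} (hp : 1 < p)
    {Ω : Set (EuclideanSpace ℝ (Fin (m + 1)))} (hΩ : IsOpen Ω) (hbd : IsBounded Ω)
    (hconv : Convex ℝ Ω) (hσ₀ : 0 < σ) (hσ₁ : σ ≤ 1) :
    (poincareConst p Ω)⁻¹ * ENNReal.ofReal (σ * alphaC p σ ^ p) ≤ lamC p Ω σ := by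
  have hp0 : 0 < p := zero_lt_one.trans hp
  have hα : 0 < alphaC p σ :=
    mul_pos (div_pos (sub_pos.2 hp) hp0) (Real.rpow_pos_of_pos hσ₀ _)
  have hαp : 0 < alphaC p σ ^ p := Real.rpow_pos_of_pos hα p
  refine le_iInf₂ fun u hu => le_iInf fun hW₀ => ?_
  set C := poincareConst p Ω
  set B := ∫⁻ x, ENNReal.ofReal (|u x| ^ p) ∂surf Ω +
    ∫⁻ x in Ω, ENNReal.ofReal (‖fderiv ℝ u x‖ ^ p)
  have hW : wnormC p Ω σ u ≤ ENNReal.ofReal (alphaC p σ ^ p)⁻¹ * (C * B) :=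
    (wnormC_le hp0.le hα u).trans <| by
      gcongr
      exact setLIntegral_rpow_le_poincareConst_mul hp hΩ hbd hconv hu.1 hu.2.1
  have hW_top : wnormC p Ω σ u ≠ ∞ :=
    ne_top_of_le_ne_top (ENNReal.mul_ne_top ENNReal.ofReal_ne_top hu.2.2.1) (wnormC_le hp0.le hα u)
  rw [ENNReal.le_div_iff_mul_le (Or.inl hW₀) (Or.inl hW_top)]
  calc C⁻¹ * ENNReal.ofReal (σ * alphaC p σ ^ p) * wnormC p Ω σ u
      ≤ C⁻¹ * ENNReal.ofReal (σ * alphaC p σ ^ p) *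
          (ENNReal.ofReal (alphaC p σ ^ p)⁻¹ * (C * B)) := by gcongr
    _ = (C⁻¹ * C) * (ENNReal.ofReal (σ * alphaC p σ ^ p) * ENNReal.ofReal (alphaC p σ ^ p)⁻¹) *
          B := by ring
    _ ≤ 1 * ENNReal.ofReal σ * B := by
        rw [← ENNReal.ofReal_mul (by positivity), mul_inv_cancel_right₀ hαp.ne']
        gcongr
        exact ENNReal.inv_mul_le_one C
    _ ≤ QpC p Ω σ u := by rw [one_mul]; exact mul_add_le_QpC hσ₁ u

theorem lam_tendsto_top_general (n : ℕ) (hn : 1 ≤ n) (p : ℝ) (hp : 1 < p)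
    (Ω : Set (EuclideanSpace ℝ (Fin n))) (hΩ : IsOpen Ω)
    (hbd : IsBounded Ω) (hconv : Convex ℝ Ω) :
    Tendsto (fun σ : ℝ => lamC p Ω σ) (𝓝[>] (0 : ℝ)) (𝓝 (∞ : ℝ≥0∞)) := by
  obtain ⟨m, rfl⟩ := Nat.exists_eq_add_of_le' hn
  have hk : 0 < ((p - 1) / p) ^ p := Real.rpow_pos_of_pos (div_pos (sub_pos.2 hp) (by linarith)) p
  have hlower : ∀ᶠ σ in 𝓝[>] 0, (poincareConst p Ω)⁻¹ *
      ENNReal.ofReal (((p - 1) / p) ^ p * σ ^ (1 / (1 - p))) ≤ lamC p Ω σ := by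
    filter_upwards [Ioo_mem_nhdsGT zero_lt_one] with σ hσ
    rw [← mul_alphaC_rpow hp hσ.1]
    exact inv_poincareConst_mul_le_lamC hp hΩ hbd hconv hσ.1 hσ.2.le
  refine tendsto_nhds_top_mono ?_ hlower
  have hpow : Tendsto (fun σ : ℝ => σ ^ (1 / (1 - p))) (𝓝[>] 0) atTop :=
    tendsto_rpow_neg_nhdsGT_zero (one_div_neg.2 (sub_neg.2 hp))
  have h := ENNReal.Tendsto.const_mul (a := (poincareConst p Ω)⁻¹)
    (ENNReal.tendsto_ofReal_atTop.comp (hpow.const_mul_atTop hk)) (Or.inl ENNReal.top_ne_zero)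
  rwa [ENNReal.mul_top (ENNReal.inv_ne_zero.2 (poincareConst_ne_top hp.le Ω))] at h

/-- **Proposition 4.3, (4.4).** For `Ω ⊂ ℝⁿ` open, bounded, convex with `C²` boundary and
constant boundary parameter `σ`, one has `λ_p(Ω,σ) → +∞` as `σ → 0+`. -/
theorem lam_tendsto_top (n : ℕ) (hn : 1 ≤ n) (p : ℝ) (hp : 1 < p)
    (Ω : Set (EuclideanSpace ℝ (Fin n))) (hΩ : IsOpen Ω) (hne : Ω.Nonempty)
    (hbd : IsBounded Ω) (hconv : Convex ℝ Ω) (hC2 : HasC2Boundary Ω) :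
    Tendsto (fun σ : ℝ => lamC p Ω σ) (𝓝[>] (0 : ℝ)) (𝓝 (∞ : ℝ≥0∞)) :=
  lam_tendsto_top_general n hn p hp Ω hΩ hbd hconv

end RobinHardy
end
end

section
/- Let 1 < p < n and R > 0, and let B_R^c = {x ∈ ℝ^n : |x| > R} be the complement of the closed ball of radius R centered at the origin. Then for every u ∈ W^{1,p}(B_R^c), ∫_{B_R^c} |∇u(x)|^p dx ≥ ((n-p)/p)^p ∫_{B_R^c} |u(x)|^p/|x|^p dx. -/
open MeasureTheory Metric Set Filter Bornology
open scoped ENNReal Topology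

noncomputable section

namespace RobinHardy

/-!
Integrating in polar coordinates reduces the inequality to the weighted Hardy inequality
`κ ^ p ∫_R^∞ |f| ^ p r ^ (κ p - 1) ≤ ∫_R^∞ |f'| ^ p r ^ (κ p + p - 1)`, `κ = (n - p) / p`,
along each ray `f r = u (r ω)`. Finiteness of the left side forces `f` to be frequently small at
infinity, so `|f r| ≤ ∫_r^∞ |f'|`, and the tail operator is bounded by Hölder's inequality against
the weight `s ^ (-(κ + 1) (p - 1) / p)` followed by Fubini.
-/

lemma lintegral_Ioi_rpow_of_lt {e c : ℝ} (he : e < -1) (hc : 0 < c) :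
    ∫⁻ s in Ioi c, ENNReal.ofReal (s ^ e) = ENNReal.ofReal (c ^ (e + 1) / -(e + 1)) := by
  rw [← ofReal_integral_eq_lintegral_ofReal (integrableOn_Ioi_rpow_of_lt he hc),
    integral_Ioi_rpow_of_lt he hc, div_neg, neg_div]
  filter_upwards [ae_restrict_mem measurableSet_Ioi] with s hs
  exact Real.rpow_nonneg (hc.trans hs).le _

lemma lintegral_Ioo_zero_rpow {e s : ℝ} (he : -1 < e) (hs : 0 ≤ s) :
    ∫⁻ r in Ioo 0 s, ENNReal.ofReal (r ^ e) = ENNReal.ofReal (s ^ (e + 1) / (e + 1)) := by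
  have hint : IntegrableOn (fun r : ℝ => r ^ e) (Ioc 0 s) :=
    (intervalIntegrable_iff_integrableOn_Ioc_of_le hs).mp
      (intervalIntegral.intervalIntegrable_rpow' he)
  rw [Measure.restrict_congr_set Ioo_ae_eq_Ioc, ← ofReal_integral_eq_lintegral_ofReal hint,
    ← intervalIntegral.integral_of_le hs, integral_rpow (Or.inl he),
    Real.zero_rpow (by linarith), sub_zero]
  filter_upwards [ae_restrict_mem measurableSet_Ioc] with r hr
  exact Real.rpow_nonneg hr.1.le _

lemma rpow_setLIntegral_Ioi_le {p κ r : ℝ} (hp : 1 < p) (hκ : 0 < κ) (hr : 0 < r) {g : ℝ → ℝ≥0∞}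
    (hg : AEMeasurable g (volume.restrict (Ioi r))) :
    (∫⁻ s in Ioi r, g s) ^ p ≤ ENNReal.ofReal ((r ^ (-κ) / κ) ^ (p - 1)) *
      ∫⁻ s in Ioi r, g s ^ p * ENNReal.ofReal (s ^ ((κ + 1) * (p - 1))) := by
  have hp0 : 0 < p := by linarith
  have hpq : p.HolderConjugate (p / (p - 1)) := .conjExponent hp
  set q := p / (p - 1)
  set a := (κ + 1) * (p - 1) / p
  have haq : a * q = κ + 1 := by
    simp only [a, q]
    field_simp [(by linarith : p - 1 ≠ 0)]
  have hsplit : ∀ s ∈ Ioi r, g s = g s * ENNReal.ofReal (s ^ a) * ENNReal.ofReal (s ^ (-a)) := by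
    intro s hs
    have hs0 : 0 < s := hr.trans hs
    rw [mul_assoc, ← ENNReal.ofReal_mul (by positivity), ← Real.rpow_add hs0,
      add_neg_cancel, Real.rpow_zero, ENNReal.ofReal_one, mul_one]
  have hfirst : ∫⁻ s in Ioi r, (g s * ENNReal.ofReal (s ^ a)) ^ p =
      ∫⁻ s in Ioi r, g s ^ p * ENNReal.ofReal (s ^ ((κ + 1) * (p - 1))) := by
    refine setLIntegral_congr_fun measurableSet_Ioi fun s hs => ?_
    have hs0 : 0 < s := hr.trans hs
    rw [ENNReal.mul_rpow_of_nonneg _ _ hp0.le, ENNReal.ofReal_rpow_of_nonneg (by positivity) hp0.le,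
      ← Real.rpow_mul hs0.le, div_mul_cancel₀ _ hp0.ne']
  have hsecond : ∫⁻ s in Ioi r, ENNReal.ofReal (s ^ (-a)) ^ q = ENNReal.ofReal (r ^ (-κ) / κ) := by
    have h := lintegral_Ioi_rpow_of_lt (by linarith : -(κ + 1) < -1) hr
    rw [show -(κ + 1) + 1 = -κ by ring, neg_neg] at h
    rw [← h]
    refine setLIntegral_congr_fun measurableSet_Ioi fun s hs => ?_
    have hs0 : 0 < s := hr.trans hs
    rw [ENNReal.ofReal_rpow_of_nonneg (by positivity) hpq.symm.nonneg, ← Real.rpow_mul hs0.le,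
      neg_mul, haq]
  calc (∫⁻ s in Ioi r, g s) ^ p
      = (∫⁻ s in Ioi r, g s * ENNReal.ofReal (s ^ a) * ENNReal.ofReal (s ^ (-a))) ^ p := by
        rw [setLIntegral_congr_fun measurableSet_Ioi hsplit]
    _ ≤ ((∫⁻ s in Ioi r, (g s * ENNReal.ofReal (s ^ a)) ^ p) ^ (1 / p) *
          (∫⁻ s in Ioi r, ENNReal.ofReal (s ^ (-a)) ^ q) ^ (1 / q)) ^ p := by
        gcongr
        exact ENNReal.lintegral_mul_le_Lp_mul_Lq _ hpq (hg.mul (by fun_prop)) (by fun_prop)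
    _ = _ := by
        rw [hfirst, hsecond, ENNReal.mul_rpow_of_nonneg _ _ hp0.le, ← ENNReal.rpow_mul,
          ← ENNReal.rpow_mul, one_div_mul_cancel hp0.ne', ENNReal.rpow_one, one_div_mul_eq_div,
          hpq.div_conj_eq_sub_one, ENNReal.ofReal_rpow_of_nonneg (by positivity) (by linarith),
          mul_comm]

lemma lintegral_Ioi_lintegral_Ioi_mul_rpow_le {κ R : ℝ} (hκ : 0 < κ) (hR : 0 ≤ R)
    {h : ℝ → ℝ≥0∞} (hh : Measurable h) :
    ∫⁻ r in Ioi R, (∫⁻ s in Ioi r, h s) * ENNReal.ofReal (r ^ (κ - 1)) ≤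
      ENNReal.ofReal κ⁻¹ * ∫⁻ s in Ioi R, h s * ENNReal.ofReal (s ^ κ) := by
  set μR := volume.restrict (Ioi R)
  set K : ℝ → ℝ → ℝ≥0∞ := fun r s => {w : ℝ × ℝ | w.1 < w.2}.indicator (fun w => h w.2) (r, s) *
    ENNReal.ofReal (r ^ (κ - 1))
  have hK : Measurable (Function.uncurry K) :=
    ((hh.comp measurable_snd).indicator (measurableSet_lt measurable_fst measurable_snd)).mul
      (by fun_prop)
  have hinner : ∀ r ∈ Ioi R, (∫⁻ s in Ioi r, h s) * ENNReal.ofReal (r ^ (κ - 1)) =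
      ∫⁻ s, K r s ∂μR := by
    intro r hr
    have hK_eq : ∀ s, K r s = (Ioi r).indicator h s * ENNReal.ofReal (r ^ (κ - 1)) := fun s => by
      by_cases hrs : r < s <;> simp [K, indicator_apply, hrs]
    simp_rw [hK_eq]
    rw [lintegral_mul_const' _ _ ENNReal.ofReal_ne_top, lintegral_indicator measurableSet_Ioi,
      Measure.restrict_restrict measurableSet_Ioi, inter_eq_left.mpr (Ioi_subset_Ioi hr.le)]
  have hswap : ∀ s ∈ Ioi R, ∫⁻ r, K r s ∂μR ≤ h s * ENNReal.ofReal (s ^ κ / κ) := by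
    intro s hs
    have hK_eq : ∀ r, K r s = (Iio s).indicator (fun r => h s * ENNReal.ofReal (r ^ (κ - 1))) r :=
      fun r => by by_cases hrs : r < s <;> simp [K, indicator_apply, hrs]
    simp_rw [hK_eq]
    rw [lintegral_indicator measurableSet_Iio, lintegral_const_mul _ (by fun_prop),
      Measure.restrict_restrict measurableSet_Iio]
    gcongr
    calc ∫⁻ r in Iio s ∩ Ioi R, ENNReal.ofReal (r ^ (κ - 1))
        ≤ ∫⁻ r in Ioo 0 s, ENNReal.ofReal (r ^ (κ - 1)) :=
          lintegral_mono_set fun r hr => ⟨hR.trans_lt hr.2, hr.1⟩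
      _ = ENNReal.ofReal (s ^ κ / κ) := by
          rw [lintegral_Ioo_zero_rpow (by linarith) (hR.trans hs.le), sub_add_cancel]
  calc ∫⁻ r in Ioi R, (∫⁻ s in Ioi r, h s) * ENNReal.ofReal (r ^ (κ - 1))
      = ∫⁻ r, ∫⁻ s, K r s ∂μR ∂μR := setLIntegral_congr_fun measurableSet_Ioi hinner
    _ = ∫⁻ s, ∫⁻ r, K r s ∂μR ∂μR := lintegral_lintegral_swap hK.aemeasurable
    _ ≤ ∫⁻ s in Ioi R, h s * ENNReal.ofReal (s ^ κ / κ) :=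
        setLIntegral_mono' measurableSet_Ioi hswap
    _ = _ := by
        rw [← lintegral_const_mul' _ _ ENNReal.ofReal_ne_top]
        refine setLIntegral_congr_fun measurableSet_Ioi fun s hs => ?_
        rw [div_eq_mul_inv, ENNReal.ofReal_mul (Real.rpow_nonneg (hR.trans hs.le) _)]
        ring

theorem lintegral_rpow_lintegral_Ioi_le {p κ R : ℝ} (hp : 1 < p) (hκ : 0 < κ) (hR : 0 ≤ R)
    {g : ℝ → ℝ≥0∞} (hg : Measurable g) :
    ∫⁻ r in Ioi R, (∫⁻ s in Ioi r, g s) ^ p * ENNReal.ofReal (r ^ (κ * p - 1)) ≤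
      ENNReal.ofReal (κ⁻¹ ^ p) * ∫⁻ s in Ioi R, g s ^ p * ENNReal.ofReal (s ^ (κ * p + p - 1)) := by
  set h : ℝ → ℝ≥0∞ := fun s => g s ^ p * ENNReal.ofReal (s ^ ((κ + 1) * (p - 1)))
  have hpointwise : ∀ r ∈ Ioi R, (∫⁻ s in Ioi r, g s) ^ p * ENNReal.ofReal (r ^ (κ * p - 1)) ≤
      ENNReal.ofReal (κ⁻¹ ^ (p - 1)) * ((∫⁻ s in Ioi r, h s) * ENNReal.ofReal (r ^ (κ - 1))) := by
    intro r hr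
    have hr0 : 0 < r := hR.trans_lt hr
    have hweight : (r ^ (-κ) / κ) ^ (p - 1) * r ^ (κ * p - 1) = κ⁻¹ ^ (p - 1) * r ^ (κ - 1) := by
      rw [div_eq_mul_inv, Real.mul_rpow (by positivity) (by positivity), ← Real.rpow_mul hr0.le,
        mul_comm _ (κ⁻¹ ^ (p - 1)), mul_assoc, ← Real.rpow_add hr0]
      ring_nf
    calc (∫⁻ s in Ioi r, g s) ^ p * ENNReal.ofReal (r ^ (κ * p - 1))
        ≤ ENNReal.ofReal ((r ^ (-κ) / κ) ^ (p - 1)) * (∫⁻ s in Ioi r, h s) *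
            ENNReal.ofReal (r ^ (κ * p - 1)) := by
          gcongr
          exact rpow_setLIntegral_Ioi_le hp hκ hr0 hg.aemeasurable
      _ = _ := by
          rw [mul_right_comm, ← ENNReal.ofReal_mul (by positivity), hweight,
            ENNReal.ofReal_mul (by positivity)]
          ring
  have hh_weight : ∀ s ∈ Ioi R, h s * ENNReal.ofReal (s ^ κ) =
      g s ^ p * ENNReal.ofReal (s ^ (κ * p + p - 1)) := by
    intro s hs
    have hs0 : 0 < s := hR.trans_lt hs
    rw [mul_assoc, ← ENNReal.ofReal_mul (by positivity), ← Real.rpow_add hs0]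
    ring_nf
  calc ∫⁻ r in Ioi R, (∫⁻ s in Ioi r, g s) ^ p * ENNReal.ofReal (r ^ (κ * p - 1))
      ≤ ∫⁻ r in Ioi R, ENNReal.ofReal (κ⁻¹ ^ (p - 1)) *
          ((∫⁻ s in Ioi r, h s) * ENNReal.ofReal (r ^ (κ - 1))) :=
        setLIntegral_mono' measurableSet_Ioi hpointwise
    _ ≤ ENNReal.ofReal (κ⁻¹ ^ (p - 1)) *
          (ENNReal.ofReal κ⁻¹ * ∫⁻ s in Ioi R, h s * ENNReal.ofReal (s ^ κ)) := by
        rw [lintegral_const_mul' _ _ ENNReal.ofReal_ne_top]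
        gcongr
        exact lintegral_Ioi_lintegral_Ioi_mul_rpow_le hκ hR (by fun_prop)
    _ = _ := by
        rw [← mul_assoc, ← ENNReal.ofReal_mul (by positivity),
          ← Real.rpow_add_one (inv_ne_zero hκ.ne'), sub_add_cancel,
          setLIntegral_congr_fun measurableSet_Ioi hh_weight]

lemma frequently_abs_lt_of_lintegral_ne_top {f : ℝ → ℝ} {p e R : ℝ} (hp : 0 < p) (he : -1 ≤ e)
    (hf : ∫⁻ r in Ioi R, ENNReal.ofReal (|f r| ^ p) * ENNReal.ofReal (r ^ e) ≠ ⊤) {ε : ℝ}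
    (hε : 0 < ε) : ∃ᶠ r in atTop, |f r| < ε := by
  by_contra hcon
  obtain ⟨M, hM⟩ := eventually_atTop.mp (not_frequently.mp hcon)
  set M' := max M (max R 1)
  have hM'0 : 0 < M' := lt_max_of_lt_right (lt_max_of_lt_right one_pos)
  have hbound : ENNReal.ofReal (ε ^ p) * ∫⁻ r in Ioi M', ENNReal.ofReal (r ^ e) ≠ ⊤ := by
    refine ne_top_of_le_ne_top hf ?_
    rw [← lintegral_const_mul' _ _ ENNReal.ofReal_ne_top]
    refine (setLIntegral_mono' measurableSet_Ioi fun r hr => ?_).trans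
      (lintegral_mono_set (Ioi_subset_Ioi (le_max_of_le_right (le_max_left R 1))))
    gcongr
    exact not_lt.mp (hM r ((le_max_left M _).trans hr.le))
  have hint : IntegrableOn (fun r : ℝ => r ^ e) (Ioi M') := by
    refine (lintegral_ofReal_ne_top_iff_integrable (by fun_prop) ?_).mp fun htop =>
      hbound (ENNReal.mul_eq_top.mpr (.inl ⟨(ENNReal.ofReal_pos.mpr (by positivity)).ne', htop⟩))
    filter_upwards [ae_restrict_mem measurableSet_Ioi] with r hr
    exact Real.rpow_nonneg (hM'0.trans hr).le _
  exact absurd ((integrableOn_Ioi_rpow_iff hM'0).mp hint) (not_lt.mpr he)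

lemma enorm_le_lintegral_Ioi_enorm_deriv {f f' : ℝ → ℝ} {r : ℝ} (hf' : Measurable f')
    (hderiv : ∀ x ∈ Ici r, HasDerivAt f (f' x) x) (hsmall : ∀ ε > 0, ∃ᶠ T in atTop, |f T| < ε) :
    ‖f r‖ₑ ≤ ∫⁻ s in Ioi r, ‖f' s‖ₑ := by
  by_cases htop : ∫⁻ s in Ioi r, ‖f' s‖ₑ = ⊤
  · exact htop ▸ le_top
  have hint : IntegrableOn f' (Ioi r) := ⟨hf'.aestronglyMeasurable, Ne.lt_top htop⟩
  refine ENNReal.le_of_forall_pos_le_add fun ε hε _ => ?_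
  obtain ⟨T, hT, hrT⟩ := ((hsmall ε hε).and_eventually (eventually_gt_atTop r)).exists
  have hFTC : ∫ s in r..T, f' s = f T - f r :=
    intervalIntegral.integral_eq_sub_of_hasDerivAt
      (fun x hx => hderiv x (uIcc_of_le hrT.le ▸ hx).1)
      ((intervalIntegrable_iff_integrableOn_Ioc_of_le hrT.le).mpr
        (hint.mono_set Ioc_subset_Ioi_self))
  calc ‖f r‖ₑ = ‖f T - (f T - f r)‖ₑ := by rw [sub_sub_cancel]
    _ ≤ ‖f T‖ₑ + ‖∫ s in Ioc r T, f' s‖ₑ := by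
        rw [← intervalIntegral.integral_of_le hrT.le, hFTC]
        exact enorm_sub_le
    _ ≤ ε + ∫⁻ s in Ioi r, ‖f' s‖ₑ := by
        gcongr
        · rw [Real.enorm_eq_ofReal_abs]
          exact (ENNReal.ofReal_le_ofReal hT.le).trans_eq ENNReal.ofReal_coe_nnreal
        · exact (enorm_integral_le_lintegral_enorm _).trans
            (lintegral_mono_set Ioc_subset_Ioi_self)
    _ = _ := add_comm _ _

theorem weighted_hardy_Ioi {p κ R : ℝ} (hp : 1 < p) (hκ : 0 < κ) (hR : 0 ≤ R) {f f' : ℝ → ℝ}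
    (hf' : Measurable f') (hderiv : ∀ r ∈ Ioi R, HasDerivAt f (f' r) r)
    (hf : ∫⁻ r in Ioi R, ENNReal.ofReal (|f r| ^ p) * ENNReal.ofReal (r ^ (κ * p - 1)) ≠ ⊤) :
    ENNReal.ofReal (κ ^ p) *
        ∫⁻ r in Ioi R, ENNReal.ofReal (|f r| ^ p) * ENNReal.ofReal (r ^ (κ * p - 1)) ≤
      ∫⁻ r in Ioi R, ENNReal.ofReal (|f' r| ^ p) * ENNReal.ofReal (r ^ (κ * p + p - 1)) := by
  have hp0 : 0 < p := by linarith
  have hsmall : ∀ ε > 0, ∃ᶠ T in atTop, |f T| < ε := fun ε hε =>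
    frequently_abs_lt_of_lintegral_ne_top hp0 (by nlinarith) hf hε
  have hofReal_rpow : ∀ x : ℝ, ENNReal.ofReal (|x| ^ p) = ‖x‖ₑ ^ p := fun x => by
    rw [Real.enorm_eq_ofReal_abs, ENNReal.ofReal_rpow_of_nonneg (abs_nonneg x) hp0.le]
  have htail : ∀ r ∈ Ioi R, ENNReal.ofReal (|f r| ^ p) ≤ (∫⁻ s in Ioi r, ‖f' s‖ₑ) ^ p := by
    intro r hr
    rw [hofReal_rpow]
    gcongr
    exact enorm_le_lintegral_Ioi_enorm_deriv hf'
      (fun x hx => hderiv x (mem_Ioi.mpr (lt_of_lt_of_le hr hx))) hsmall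
  calc ENNReal.ofReal (κ ^ p) *
        ∫⁻ r in Ioi R, ENNReal.ofReal (|f r| ^ p) * ENNReal.ofReal (r ^ (κ * p - 1))
      ≤ ENNReal.ofReal (κ ^ p) *
        ∫⁻ r in Ioi R, (∫⁻ s in Ioi r, ‖f' s‖ₑ) ^ p * ENNReal.ofReal (r ^ (κ * p - 1)) :=
        mul_le_mul_right
          (setLIntegral_mono' measurableSet_Ioi fun r hr => mul_le_mul_left (htail r hr) _) _
    _ ≤ ENNReal.ofReal (κ ^ p) * (ENNReal.ofReal (κ⁻¹ ^ p) *
          ∫⁻ s in Ioi R, ‖f' s‖ₑ ^ p * ENNReal.ofReal (s ^ (κ * p + p - 1))) := by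
        gcongr
        exact lintegral_rpow_lintegral_Ioi_le hp hκ hR hf'.enorm
    _ = _ := by
        simp_rw [← mul_assoc, ← ENNReal.ofReal_mul (by positivity : 0 ≤ κ ^ p),
          ← Real.mul_rpow hκ.le (inv_nonneg.mpr hκ.le), mul_inv_cancel₀ hκ.ne', Real.one_rpow,
          ENNReal.ofReal_one, one_mul, hofReal_rpow]

section Ray

variable {E : Type*} [NormedAddCommGroup E] [NormedSpace ℝ E]

lemma hardy_along_ray {d : ℕ} {p R : ℝ} (hp : 1 < p) (hpd : p < d) (hR : 0 ≤ R) {v : E → ℝ}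
    (hdiff : ∀ x : E, R < ‖x‖ → DifferentiableAt ℝ v x) (ω : sphere (0 : E) 1)
    (hfin : ∫⁻ r in Ioi R, ENNReal.ofReal (r ^ (d - 1)) *
      ENNReal.ofReal (|v (r • (ω : E))| ^ p / ‖r • (ω : E)‖ ^ p) ≠ ⊤) :
    ENNReal.ofReal (((d - p) / p) ^ p) * ∫⁻ r in Ioi R, ENNReal.ofReal (r ^ (d - 1)) *
        ENNReal.ofReal (|v (r • (ω : E))| ^ p / ‖r • (ω : E)‖ ^ p) ≤
      ∫⁻ r in Ioi R, ENNReal.ofReal (r ^ (d - 1)) *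
        ENNReal.ofReal (‖fderiv ℝ v (r • (ω : E))‖ ^ p) := by
  have hp0 : 0 < p := by linarith
  set κ := (d - p) / p
  have hκ : 0 < κ := div_pos (by linarith) hp0
  have hκp : κ * p = d - p := div_mul_cancel₀ _ hp0.ne'
  have hd : 1 ≤ d := by exact_mod_cast (hp.trans hpd).le
  have hpow : ∀ r : ℝ, r ^ (d - 1) = r ^ ((d : ℝ) - 1) := fun r => by
    rw [← Real.rpow_natCast, Nat.cast_sub hd, Nat.cast_one]
  have hnorm : ∀ r ∈ Ioi R, ‖r • (ω : E)‖ = r := fun r (hr : R < r) => by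
    rw [norm_smul, norm_eq_of_mem_sphere ω, mul_one, Real.norm_of_nonneg (hR.trans hr.le)]
  have hderiv : ∀ r ∈ Ioi R, HasDerivAt (fun t : ℝ => v (t • (ω : E)))
      (fderiv ℝ v (r • (ω : E)) ω) r := fun r hr => by
    have h := (hdiff _ ((hnorm r hr).symm ▸ hr)).hasFDerivAt.comp_hasDerivAt r
      ((hasDerivAt_id r).smul_const (ω : E))
    rwa [one_smul] at h
  have hweight : ∀ r ∈ Ioi R, ENNReal.ofReal (r ^ (d - 1)) *
      ENNReal.ofReal (|v (r • (ω : E))| ^ p / ‖r • (ω : E)‖ ^ p) =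
      ENNReal.ofReal (|v (r • (ω : E))| ^ p) * ENNReal.ofReal (r ^ (κ * p - 1)) := by
    intro r hr
    have hr0 : 0 < r := hR.trans_lt hr
    rw [hnorm r hr, hpow, mul_comm, ← ENNReal.ofReal_mul (by positivity),
      ← ENNReal.ofReal_mul (by positivity), div_mul_eq_mul_div, mul_div_assoc,
      ← Real.rpow_sub hr0, hκp]
    ring_nf
  have hgrad : ∀ r ∈ Ioi R, ENNReal.ofReal (|deriv (fun t : ℝ => v (t • (ω : E))) r| ^ p) *
      ENNReal.ofReal (r ^ (κ * p + p - 1)) ≤ ENNReal.ofReal (r ^ (d - 1)) *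
        ENNReal.ofReal (‖fderiv ℝ v (r • (ω : E))‖ ^ p) := by
    intro r hr
    rw [hpow, hκp, sub_add_cancel, mul_comm, (hderiv r hr).deriv]
    gcongr
    simpa [norm_eq_of_mem_sphere ω] using (fderiv ℝ v (r • (ω : E))).le_opNorm ω
  rw [setLIntegral_congr_fun measurableSet_Ioi hweight] at hfin ⊢
  exact (weighted_hardy_Ioi hp hκ hR
    (measurable_deriv _) (fun r hr => (hderiv r hr).deriv ▸ hderiv r hr) hfin).trans
    (setLIntegral_mono' measurableSet_Ioi hgrad)

end Ray

section Exterior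

variable {E : Type*} [NormedAddCommGroup E] [NormedSpace ℝ E] [MeasurableSpace E] [BorelSpace E]
  [FiniteDimensional ℝ E] (μ : Measure E) [μ.IsAddHaarMeasure]

theorem lintegral_eq_lintegral_toSphere [Nontrivial E] {F : E → ℝ≥0∞} (hF : Measurable F) :
    ∫⁻ x, F x ∂μ = ∫⁻ ω : sphere (0 : E) 1, (∫⁻ r in Ioi (0 : ℝ),
      ENNReal.ofReal (r ^ (Module.finrank ℝ E - 1)) * F (r • (ω : E))) ∂μ.toSphere := by
  calc ∫⁻ x, F x ∂μ = ∫⁻ x : ({0}ᶜ : Set E), F x ∂μ.comap (↑) := by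
        rw [lintegral_subtype_comap (measurableSet_singleton _).compl, restrict_compl_singleton]
    _ = ∫⁻ z : sphere (0 : E) 1 × Ioi (0 : ℝ), F ((z.2 : ℝ) • (z.1 : E))
          ∂μ.toSphere.prod (.volumeIoiPow (Module.finrank ℝ E - 1)) := by
        rw [← (μ.measurePreserving_homeomorphUnitSphereProd).lintegral_comp_emb
          (Homeomorph.measurableEmbedding _)]
        refine lintegral_congr fun x => ?_
        simp [smul_inv_smul₀ (norm_ne_zero_iff.mpr x.2)]
    _ = ∫⁻ ω, ∫⁻ r, F ((r : ℝ) • (ω : E)) ∂.volumeIoiPow (Module.finrank ℝ E - 1) ∂μ.toSphere :=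
        lintegral_prod _ (by fun_prop)
    _ = _ := by
        refine lintegral_congr fun ω => ?_
        rw [Measure.volumeIoiPow, lintegral_withDensity_eq_lintegral_mul _ (by fun_prop)
          (by fun_prop), ← lintegral_subtype_comap measurableSet_Ioi]
        rfl

theorem setLIntegral_lt_norm_eq_lintegral_toSphere [Nontrivial E] {R : ℝ} (hR : 0 ≤ R)
    {F : E → ℝ≥0∞} (hF : Measurable F) :
    ∫⁻ x in {x : E | R < ‖x‖}, F x ∂μ = ∫⁻ ω : sphere (0 : E) 1, (∫⁻ r in Ioi R,
      ENNReal.ofReal (r ^ (Module.finrank ℝ E - 1)) * F (r • (ω : E))) ∂μ.toSphere := by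
  have hΩ : MeasurableSet {x : E | R < ‖x‖} := measurableSet_lt measurable_const measurable_norm
  rw [← lintegral_indicator hΩ, lintegral_eq_lintegral_toSphere μ (hF.indicator hΩ)]
  refine lintegral_congr fun ω => ?_
  have hray : ∀ r ∈ Ioi (0 : ℝ), ENNReal.ofReal (r ^ (Module.finrank ℝ E - 1)) *
      {x : E | R < ‖x‖}.indicator F (r • (ω : E)) = (Ioi R).indicator
        (fun r => ENNReal.ofReal (r ^ (Module.finrank ℝ E - 1)) * F (r • (ω : E))) r := by
    intro r (hr : 0 < r)
    have hnorm : ‖r • (ω : E)‖ = r := by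
      rw [norm_smul, norm_eq_of_mem_sphere ω, mul_one, Real.norm_of_nonneg hr.le]
    by_cases hrR : R < r <;> simp [hnorm, hrR]
  rw [setLIntegral_congr_fun measurableSet_Ioi hray, lintegral_indicator measurableSet_Ioi,
    Measure.restrict_restrict measurableSet_Ioi, inter_eq_left.mpr (Ioi_subset_Ioi hR)]

theorem exterior_hardy_of_measurable {p R : ℝ} (hp : 1 < p) (hpd : p < Module.finrank ℝ E)
    (hR : 0 ≤ R) {v : E → ℝ} (hv : Measurable v)
    (hdiff : ∀ x : E, R < ‖x‖ → DifferentiableAt ℝ v x)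
    (hfin : ∫⁻ x in {x : E | R < ‖x‖}, ENNReal.ofReal (|v x| ^ p / ‖x‖ ^ p) ∂μ ≠ ⊤) :
    ENNReal.ofReal (((Module.finrank ℝ E - p) / p) ^ p) *
        ∫⁻ x in {x : E | R < ‖x‖}, ENNReal.ofReal (|v x| ^ p / ‖x‖ ^ p) ∂μ ≤
      ∫⁻ x in {x : E | R < ‖x‖}, ENNReal.ofReal (‖fderiv ℝ v x‖ ^ p) ∂μ := by
  have : Nontrivial E := Module.nontrivial_of_finrank_pos (R := ℝ)
    (by exact_mod_cast (by linarith : (0 : ℝ) < p).trans hpd)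
  set F := fun x : E => ENNReal.ofReal (|v x| ^ p / ‖x‖ ^ p)
  have hF : Measurable F := by fun_prop
  have hG : Measurable fun x : E => ENNReal.ofReal (‖fderiv ℝ v x‖ ^ p) :=
    ((measurable_fderiv ℝ v).norm.pow_const p).ennreal_ofReal
  rw [setLIntegral_lt_norm_eq_lintegral_toSphere μ hR hF] at hfin ⊢
  rw [setLIntegral_lt_norm_eq_lintegral_toSphere μ hR hG,
    ← lintegral_const_mul' _ _ ENNReal.ofReal_ne_top]
  have hray : Measurable fun z : sphere (0 : E) 1 × ℝ =>
      ENNReal.ofReal (z.2 ^ (Module.finrank ℝ E - 1)) * F (z.2 • (z.1 : E)) := by fun_prop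
  refine lintegral_mono_ae ?_
  filter_upwards [ae_lt_top hray.lintegral_prod_right' hfin] with ω hω
  exact hardy_along_ray hp hpd hR hdiff ω hω.ne

end Exterior

lemma setLIntegral_rpow_div_norm_rpow_ne_top {E : Type*} [NormedAddCommGroup E]
    [MeasurableSpace E] [OpensMeasurableSpace E] (μ : Measure E) {p R : ℝ} (hp : 0 ≤ p)
    (hR : 0 < R) {v : E → ℝ}
    (hfin : ∫⁻ x in {x : E | R < ‖x‖}, ENNReal.ofReal (|v x| ^ p) ∂μ ≠ ⊤) :
    ∫⁻ x in {x : E | R < ‖x‖}, ENNReal.ofReal (|v x| ^ p / ‖x‖ ^ p) ∂μ ≠ ⊤ := by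
  refine ne_top_of_le_ne_top
    (ENNReal.mul_ne_top (ENNReal.ofReal_ne_top (r := (R ^ p)⁻¹)) hfin) ?_
  rw [← lintegral_const_mul' _ _ ENNReal.ofReal_ne_top]
  refine setLIntegral_mono' (measurableSet_lt measurable_const measurable_norm)
    fun x (hx : R < ‖x‖) => ?_
  rw [← ENNReal.ofReal_mul (by positivity), ← div_eq_inv_mul]
  gcongr

/-- **Proposition 6.1 (Hardy inequality on the complement of a ball, `n > p`).**
For `1 < p < n`, `R > 0` and every `u ∈ W^{1,p}(B_R^c)`:
`∫_{B_R^c} |∇u|^p ≥ ((n-p)/p)^p ∫_{B_R^c} |u|^p/|x|^p`. -/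
theorem exterior_hardy (n : ℕ) (p R : ℝ) (hp : 1 < p) (hpn : p < n) (hR : 0 < R)
    (u : EuclideanSpace ℝ (Fin n) → ℝ)
    (hu : MemW1p p {x : EuclideanSpace ℝ (Fin n) | R < ‖x‖} u) :
    (∫⁻ x in {x : EuclideanSpace ℝ (Fin n) | R < ‖x‖},
        ENNReal.ofReal (‖fderiv ℝ u x‖ ^ p)) ≥
      ENNReal.ofReal ((((n : ℝ) - p) / p) ^ p) *
        ∫⁻ x in {x : EuclideanSpace ℝ (Fin n) | R < ‖x‖},
          ENNReal.ofReal (|u x| ^ p / ‖x‖ ^ p) := by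
  obtain ⟨hcont, hdiff, hfin, -⟩ := hu
  set Ω := {x : EuclideanSpace ℝ (Fin n) | R < ‖x‖}
  have hΩ : IsOpen Ω := isOpen_lt continuous_const continuous_norm
  -- `u` need not be measurable off `Ω`; its extension by zero is, with the same integrals on `Ω`.
  set v := Ω.indicator u
  have hvu : ∀ x ∈ Ω, v =ᶠ[𝓝 x] u := fun x hx =>
    eventuallyEq_of_mem (hΩ.mem_nhds hx) fun y hy => indicator_of_mem hy u
  have hv : Measurable v := by
    classical
    rw [show v = Ω.piecewise u 0 from piecewise_eq_indicator.symm]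
    exact (hcont.mono subset_closure).measurable_piecewise continuousOn_const hΩ.measurableSet
  have hweighted : ∫⁻ x in Ω, ENNReal.ofReal (|u x| ^ p / ‖x‖ ^ p) =
      ∫⁻ x in Ω, ENNReal.ofReal (|v x| ^ p / ‖x‖ ^ p) :=
    setLIntegral_congr_fun hΩ.measurableSet fun x hx => by rw [(hvu x hx).eq_of_nhds]
  have hgrad : ∫⁻ x in Ω, ENNReal.ofReal (‖fderiv ℝ u x‖ ^ p) =
      ∫⁻ x in Ω, ENNReal.ofReal (‖fderiv ℝ v x‖ ^ p) :=
    setLIntegral_congr_fun hΩ.measurableSet fun x hx => by rw [(hvu x hx).fderiv_eq]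
  have h := exterior_hardy_of_measurable volume hp (by simpa using hpn) hR.le hv
    (fun x hx => (hdiff x hx).congr_of_eventuallyEq (hvu x hx))
    (hweighted ▸ setLIntegral_rpow_div_norm_rpow_ne_top volume (by linarith) hR hfin)
  rw [finrank_euclideanSpace_fin] at h
  rw [ge_iff_le, hweighted, hgrad]
  exact h

end RobinHardy
end
end

section
/- Let 1 < p < n, R > 0 and ρ > R. Let f: [R,∞) → [0,∞) be a C^∞ nonnegative function with f(r) = 0 for all r ≥ ρ. Then ∫_R^∞ f(r)^p r^{n-1-p} dr ≤ (p/(n-p))^p ∫_R^∞ |f'(r)|^p r^{n-1} dr. -/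
open MeasureTheory Set Filter
open scoped ENNReal Topology

/-!
Writing `s = n - p`, `A = ∫ f^p r^(s-1)` and `B = ∫ |f'|^p r^(s+p-1)`, the fundamental theorem
of calculus for `f^p r^s` on `[R, ρ]` gives `s A ≤ p ∫ f^(p-1) |f'| r^s`, because `f(ρ) = 0`
and the boundary term at `R` is nonpositive. Hölder's inequality with the conjugate exponents
`q = p/(p-1)` and `p` bounds the right-hand side by `p A^(1/q) B^(1/p)`; as `A` is finite
(`f` has compact support), dividing by `A^(1/q)` gives `A^(1/p) ≤ (p/s) B^(1/p)`.
-/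

namespace ENNReal

theorem le_rpow_mul_of_le_mul_rpow_mul_rpow {p q : ℝ} (hpq : p.HolderConjugate q) {a b k : ℝ≥0∞}
    (ha : a ≠ ∞) (h : a ≤ k * (a ^ (1 / q) * b ^ (1 / p))) : a ≤ k ^ p * b := by
  rcases eq_or_ne a 0 with rfl | ha0
  · exact zero_le
  have hsplit : a ^ (1 / q) * a ^ (1 / p) = a := by
    rw [← rpow_add _ _ ha0 ha, add_comm, hpq.one_div_add_one_div, div_one, rpow_one]
  have hroot : a ^ (1 / p) ≤ k * b ^ (1 / p) := by
    rw [← ENNReal.mul_le_mul_iff_right (rpow_pos (pos_iff_ne_zero.2 ha0) ha).ne'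
      (rpow_ne_top_of_nonneg (one_div_nonneg.2 hpq.symm.nonneg) ha), hsplit]
    calc a ≤ k * (a ^ (1 / q) * b ^ (1 / p)) := h
      _ = a ^ (1 / q) * (k * b ^ (1 / p)) := by ring
  calc a = (a ^ (1 / p)) ^ p := by rw [← rpow_mul, one_div_mul_cancel hpq.ne_zero, rpow_one]
    _ ≤ (k * b ^ (1 / p)) ^ p := rpow_le_rpow hroot hpq.nonneg
    _ = k ^ p * b := by
      rw [mul_rpow_of_nonneg _ _ hpq.nonneg, ← rpow_mul, one_div_mul_cancel hpq.ne_zero, rpow_one]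

theorem lintegral_rpow_sub_one_mul_le {α : Type*} [MeasurableSpace α] (μ : Measure α) {p q : ℝ}
    (hpq : p.HolderConjugate q) {F G : α → ℝ≥0∞} (hF : AEMeasurable F μ) (hG : AEMeasurable G μ) :
    ∫⁻ x, F x ^ (p - 1) * G x ∂μ ≤
      (∫⁻ x, F x ^ p ∂μ) ^ (1 / q) * (∫⁻ x, G x ^ p ∂μ) ^ (1 / p) := by
  have := lintegral_mul_le_Lp_mul_Lq μ hpq.symm (hF.pow_const (p - 1)) hG
  simpa only [Pi.mul_apply, ← rpow_mul, hpq.sub_one_mul_conj] using this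

theorem ofReal_mul_rpow_rpow {x r : ℝ} (hx : 0 ≤ x) (hr : 0 ≤ r) (a : ℝ) {s : ℝ} (hs : 0 ≤ s) :
    ENNReal.ofReal (x * r ^ a) ^ s = ENNReal.ofReal (x ^ s * r ^ (a * s)) := by
  rw [ofReal_rpow_of_nonneg (by positivity) hs, Real.mul_rpow hx (by positivity),
    ← Real.rpow_mul hr]

end ENNReal

theorem ofReal_intervalIntegral_eq_setLIntegral_Ioc {φ : ℝ → ℝ} {a b : ℝ} (hab : a ≤ b)
    (hφ : ContinuousOn φ (Icc a b)) (hφ0 : ∀ x ∈ Ioc a b, 0 ≤ φ x) :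
    ENNReal.ofReal (∫ x in a..b, φ x) = ∫⁻ x in Ioc a b, ENNReal.ofReal (φ x) := by
  rw [intervalIntegral.integral_of_le hab]
  exact ofReal_integral_eq_lintegral_ofReal (hφ.integrableOn_Icc.mono_set Ioc_subset_Icc_self)
    ((ae_restrict_iff' measurableSet_Ioc).2 (ae_of_all _ hφ0))

theorem setLIntegral_Ioi_eq_Ioc_of_eq_zero {F : ℝ → ℝ≥0∞} {a b : ℝ} (hab : a ≤ b)
    (hF : ∀ x, b < x → F x = 0) : ∫⁻ x in Ioi a, F x = ∫⁻ x in Ioc a b, F x := by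
  rw [← Ioc_union_Ioi_eq_Ioi hab, lintegral_union measurableSet_Ioi Ioc_disjoint_Ioi_same,
    setLIntegral_congr_fun (g := fun _ => 0) measurableSet_Ioi (fun x hx => hF x hx),
    lintegral_zero, add_zero]

theorem integral_rpow_mul_rpow_sub_one_le {p s R ρ : ℝ} {f g : ℝ → ℝ} (hp : 1 ≤ p) (hs : 0 < s)
    (hR : 0 < R) (hRρ : R ≤ ρ) (hf : ContinuousOn f (Icc R ρ)) (hg : ContinuousOn g (Icc R ρ))
    (hfg : ∀ r ∈ Ioo R ρ, HasDerivAt f (g r) r) (hf0 : ∀ r ∈ Icc R ρ, 0 ≤ f r) (hfρ : f ρ = 0) :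
    ∫ r in R..ρ, f r ^ p * r ^ (s - 1) ≤ p / s * ∫ r in R..ρ, f r ^ (p - 1) * |g r| * r ^ s := by
  have hr0 : ∀ r ∈ Icc R ρ, r ≠ 0 := fun r hr => (hR.trans_le hr.1).ne'
  have hpow : ∀ t : ℝ, ContinuousOn (fun r : ℝ => r ^ t) (Icc R ρ) := fun t =>
    continuousOn_id.rpow_const fun r hr => Or.inl (hr0 r hr)
  have hfp : ∀ t : ℝ, 0 ≤ t → ContinuousOn (fun r => f r ^ t) (Icc R ρ) := fun t ht =>
    hf.rpow_const fun _ _ => Or.inr ht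
  have hint : ∀ {φ : ℝ → ℝ}, ContinuousOn φ (Icc R ρ) → IntervalIntegrable φ volume R ρ :=
    ContinuousOn.intervalIntegrable_of_Icc hRρ
  have hcross : IntervalIntegrable (fun r => f r ^ (p - 1) * g r * r ^ s) volume R ρ :=
    hint (((hfp _ (by linarith)).mul hg).mul (hpow s))
  have hmain : IntervalIntegrable (fun r => f r ^ p * r ^ (s - 1)) volume R ρ :=
    hint ((hfp _ (by linarith)).mul (hpow _))
  have hFTC : p * (∫ r in R..ρ, f r ^ (p - 1) * g r * r ^ s)
      + s * (∫ r in R..ρ, f r ^ p * r ^ (s - 1)) = -(f R ^ p * R ^ s) := by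
    rw [← intervalIntegral.integral_const_mul, ← intervalIntegral.integral_const_mul,
      ← intervalIntegral.integral_add (hcross.const_mul p) (hmain.const_mul s),
      intervalIntegral.integral_eq_sub_of_hasDerivAt_of_le (f := fun r => f r ^ p * r ^ s) hRρ
        ((hfp p (by linarith)).mul (hpow s))
        (fun r hr => ?_) ((hcross.const_mul p).add (hmain.const_mul s)),
      hfρ, Real.zero_rpow (by linarith), zero_mul, zero_sub]
    refine (((hfg r hr).rpow_const (Or.inr hp)).mul
      (Real.hasDerivAt_rpow_const (Or.inl (hr0 r (Ioo_subset_Icc_self hr))))).congr_deriv ?_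
    ring
  have hcross_le : -∫ r in R..ρ, f r ^ (p - 1) * g r * r ^ s ≤
      ∫ r in R..ρ, f r ^ (p - 1) * |g r| * r ^ s := by
    rw [← intervalIntegral.integral_neg]
    refine intervalIntegral.integral_mono_on hRρ hcross.neg
      (hint (((hfp _ (by linarith)).mul hg.abs).mul (hpow s))) fun r hr => ?_
    have := mul_le_mul_of_nonneg_left (neg_le_abs (g r)) (Real.rpow_nonneg (hf0 r hr) (p - 1))
    have := mul_le_mul_of_nonneg_right this (Real.rpow_nonneg (hR.le.trans hr.1) s)
    linarith
  have hbdry : 0 ≤ f R ^ p * R ^ s :=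
    mul_nonneg (Real.rpow_nonneg (hf0 R ⟨le_rfl, hRρ⟩) p) (Real.rpow_nonneg hR.le s)
  have := mul_le_mul_of_nonneg_left hcross_le (by linarith : (0 : ℝ) ≤ p)
  rw [div_mul_eq_mul_div, le_div_iff₀ hs]
  linarith

theorem lintegral_Ioi_rpow_sub_one_mul_abs_mul_rpow_le {p q s R : ℝ} (hpq : p.HolderConjugate q)
    (hR : 0 ≤ R) {f g : ℝ → ℝ} (hf : AEMeasurable f (volume.restrict (Ioi R)))
    (hg : AEMeasurable g (volume.restrict (Ioi R))) (hf0 : ∀ r ∈ Ioi R, 0 ≤ f r) :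
    ∫⁻ r in Ioi R, ENNReal.ofReal (f r ^ (p - 1) * |g r| * r ^ s) ≤
      (∫⁻ r in Ioi R, ENNReal.ofReal (f r ^ p * r ^ (s - 1))) ^ (1 / q) *
        (∫⁻ r in Ioi R, ENNReal.ofReal (|g r| ^ p * r ^ (s + p - 1))) ^ (1 / p) := by
  have hp0 : p ≠ 0 := hpq.ne_zero
  have hmid : ∫⁻ r in Ioi R, ENNReal.ofReal (f r ^ (p - 1) * |g r| * r ^ s) =
      ∫⁻ r in Ioi R, ENNReal.ofReal (f r * r ^ ((s - 1) / p)) ^ (p - 1) *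
        ENNReal.ofReal (|g r| * r ^ ((s + p - 1) / p)) := by
    refine setLIntegral_congr_fun measurableSet_Ioi fun r (hr : R < r) => ?_
    have hr0 : 0 < r := hR.trans_lt hr
    rw [ENNReal.ofReal_mul_rpow_rpow (hf0 r hr) hr0.le _ hpq.sub_one_pos.le,
      ← ENNReal.ofReal_mul (by have := hf0 r hr; positivity)]
    have hexp : (s - 1) / p * (p - 1) + (s + p - 1) / p = s := by field_simp; ring
    rw [show r ^ s = r ^ ((s - 1) / p * (p - 1)) * r ^ ((s + p - 1) / p) by
      rw [← Real.rpow_add hr0, hexp]]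
    congr 1
    ring
  have hfirst : ∫⁻ r in Ioi R, ENNReal.ofReal (f r * r ^ ((s - 1) / p)) ^ p =
      ∫⁻ r in Ioi R, ENNReal.ofReal (f r ^ p * r ^ (s - 1)) := by
    refine setLIntegral_congr_fun measurableSet_Ioi fun r (hr : R < r) => ?_
    rw [ENNReal.ofReal_mul_rpow_rpow (hf0 r hr) (hR.trans hr.le) _ hpq.nonneg,
      div_mul_cancel₀ _ hp0]
  have hlast : ∫⁻ r in Ioi R, ENNReal.ofReal (|g r| * r ^ ((s + p - 1) / p)) ^ p =
      ∫⁻ r in Ioi R, ENNReal.ofReal (|g r| ^ p * r ^ (s + p - 1)) := by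
    refine setLIntegral_congr_fun measurableSet_Ioi fun r (hr : R < r) => ?_
    rw [ENNReal.ofReal_mul_rpow_rpow (abs_nonneg _) (hR.trans hr.le) _ hpq.nonneg,
      div_mul_cancel₀ _ hp0]
  rw [hmid, ← hfirst, ← hlast]
  exact ENNReal.lintegral_rpow_sub_one_mul_le _ hpq (by fun_prop) (by fun_prop)

theorem hardy_inequality_Ioi {p s R ρ : ℝ} {f g : ℝ → ℝ} (hp : 1 < p)
    (hs : 0 < s) (hR : 0 < R) (hRρ : R ≤ ρ) (hf : ContinuousOn f (Ici R))
    (hg : ContinuousOn g (Ici R)) (hfg : ∀ r ∈ Ioi R, HasDerivAt f (g r) r)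
    (hf0 : ∀ r ∈ Ici R, 0 ≤ f r) (hfρ : ∀ r, ρ ≤ r → f r = 0) :
    ∫⁻ r in Ioi R, ENNReal.ofReal (f r ^ p * r ^ (s - 1)) ≤
      ENNReal.ofReal ((p / s) ^ p) *
        ∫⁻ r in Ioi R, ENNReal.ofReal (|g r| ^ p * r ^ (s + p - 1)) := by
  have hpq := Real.HolderConjugate.conjExponent hp
  have hIcc : Icc R ρ ⊆ Ici R := Icc_subset_Ici_self
  have hr0 : ∀ r ∈ Icc R ρ, r ≠ 0 := fun r hr => (hR.trans_le hr.1).ne'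
  have hA : ∫⁻ r in Ioi R, ENNReal.ofReal (f r ^ p * r ^ (s - 1)) =
      ENNReal.ofReal (∫ r in R..ρ, f r ^ p * r ^ (s - 1)) := by
    rw [setLIntegral_Ioi_eq_Ioc_of_eq_zero hRρ, ofReal_intervalIntegral_eq_setLIntegral_Ioc hRρ]
    · exact ((hf.mono hIcc).rpow_const fun _ _ => Or.inr (by linarith)).mul
        (continuousOn_id.rpow_const fun r hr => Or.inl (hr0 r hr))
    · intro r hr
      exact mul_nonneg (Real.rpow_nonneg (hf0 r hr.1.le) _) (Real.rpow_nonneg (hR.trans hr.1).le _)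
    · intro r hr
      rw [hfρ r hr.le, Real.zero_rpow (by linarith), zero_mul, ENNReal.ofReal_zero]
  have hC : ENNReal.ofReal (∫ r in R..ρ, f r ^ (p - 1) * |g r| * r ^ s) ≤
      ∫⁻ r in Ioi R, ENNReal.ofReal (f r ^ (p - 1) * |g r| * r ^ s) := by
    rw [ofReal_intervalIntegral_eq_setLIntegral_Ioc hRρ]
    · exact lintegral_mono_set Ioc_subset_Ioi_self
    · exact (((hf.mono hIcc).rpow_const fun _ _ => Or.inr (by linarith)).mul (hg.mono hIcc).abs).mul
        (continuousOn_id.rpow_const fun r hr => Or.inl (hr0 r hr))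
    · intro r hr
      have := hf0 r hr.1.le
      have := hR.trans hr.1
      positivity
  have hIBP := integral_rpow_mul_rpow_sub_one_le hp.le hs hR hRρ (hf.mono hIcc) (hg.mono hIcc)
    (fun r hr => hfg r hr.1) (fun r hr => hf0 r hr.1) (hfρ ρ le_rfl)
  have hHolder := lintegral_Ioi_rpow_sub_one_mul_abs_mul_rpow_le (s := s) hpq hR.le
    ((hf.mono Ioi_subset_Ici_self).aemeasurable measurableSet_Ioi)
    ((hg.mono Ioi_subset_Ici_self).aemeasurable measurableSet_Ioi) fun r (hr : R < r) => hf0 r hr.le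
  rw [← ENNReal.ofReal_rpow_of_nonneg (by positivity) (by positivity)]
  refine ENNReal.le_rpow_mul_of_le_mul_rpow_mul_rpow hpq (hA ▸ ENNReal.ofReal_ne_top) ?_
  calc _ = ENNReal.ofReal (∫ r in R..ρ, f r ^ p * r ^ (s - 1)) := hA
    _ ≤ ENNReal.ofReal (p / s * ∫ r in R..ρ, f r ^ (p - 1) * |g r| * r ^ s) :=
      ENNReal.ofReal_le_ofReal hIBP
    _ = ENNReal.ofReal (p / s) * ENNReal.ofReal (∫ r in R..ρ, f r ^ (p - 1) * |g r| * r ^ s) :=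
      ENNReal.ofReal_mul (by positivity)
    _ ≤ _ := by gcongr; exact hC.trans hHolder

/-- **Radial weighted Hardy inequality on the half-line `[R,∞)`.**
For `1 < p < n`, `0 < R < ρ` and a nonnegative `C^∞` function `f` on `[R,∞)` vanishing
for `r ≥ ρ`, one has `∫_R^∞ f(r)^p r^{n-1-p} dr ≤ (p/(n-p))^p ∫_R^∞ |f'(r)|^p r^{n-1} dr`. -/
theorem radial_hardy (n : ℕ) (p R ρ : ℝ) (hp : 1 < p) (hpn : p < n) (hR : 0 < R)
    (hρ : R < ρ) (f : ℝ → ℝ) (hf : ContDiffOn ℝ (⊤ : ℕ∞) f (Ici R))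
    (hnn : ∀ r ∈ Ici R, 0 ≤ f r) (hzero : ∀ r, ρ ≤ r → f r = 0) :
    (∫⁻ r in Ioi R, ENNReal.ofReal (f r ^ p * r ^ ((n : ℝ) - 1 - p))) ≤
      ENNReal.ofReal ((p / ((n : ℝ) - p)) ^ p) *
        ∫⁻ r in Ioi R, ENNReal.ofReal (|deriv f r| ^ p * r ^ ((n : ℝ) - 1)) := by
  -- `deriv f R` is a junk value; the one-sided derivative is continuous up to `R`.
  set g := derivWithin f (Ici R)
  have hfg : ∀ r ∈ Ioi R, HasDerivAt f (g r) r := fun r (hr : R < r) =>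
    ((hf.differentiableOn (by simp) r hr.le).hasDerivWithinAt).hasDerivAt (Ici_mem_nhds hr)
  have hB : ∫⁻ r in Ioi R, ENNReal.ofReal (|deriv f r| ^ p * r ^ ((n : ℝ) - 1)) =
      ∫⁻ r in Ioi R, ENNReal.ofReal (|g r| ^ p * r ^ ((n : ℝ) - 1)) :=
    setLIntegral_congr_fun measurableSet_Ioi fun r hr => by rw [(hfg r hr).deriv]
  rw [hB, show (n : ℝ) - 1 - p = (n - p) - 1 by ring, show (n : ℝ) - 1 = (n - p) + p - 1 by ring]
  exact hardy_inequality_Ioi hp (by linarith) hR hρ.le hf.continuousOn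
    (hf.continuousOn_derivWithin (uniqueDiffOn_Ici R) (by simp)) hfg hnn hzero
end
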